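/- arXiv:2107.04584 — 7 statements merged into one kernel-verified Lean document; each statement's English description precedes it below -/
import Mathlib

section
/- Let A = (a_1, ..., a_i) be a composition of k+1 with a_1 ≥ 2 and B = (b_1, ..., b_i) a composition of k. All partial sums Σ_{j=1}^m (a_j - b_j) for m = 1, ..., i are positive if and only if every proper prefix of the zippered word μ(A,B) contains strictly more zeros than ones. -/
/-- A composition of `n` into `i` parts. -/
def IsComposition (n i : ℕ) (l : List ℕ) : Prop :=
  l.length = i ∧ l.sum = n ∧ ∀ x ∈ l, 0 < x

/-- The zippered binary word `μ(A,B)`. -/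
def zipper (A B : List ℕ) : List ℕ :=
  (A.zip B).flatMap fun p => List.replicate p.1 0 ++ List.replicate p.2 1

lemma zipper_nil (B : List ℕ) : zipper [] B = [] := rfl

lemma zipper_nil' (A : List ℕ) : zipper A [] = [] := by
  cases A <;> rfl

lemma zipper_cons (a b : ℕ) (A B : List ℕ) :
    zipper (a :: A) (b :: B) =
      List.replicate a 0 ++ (List.replicate b 1 ++ zipper A B) := by
  simp [zipper]

lemma length_le_sum (l : List ℕ) (h : ∀ x ∈ l, 0 < x) : l.length ≤ l.sum := by
  induction l with
  | nil => simp
  | cons x t ih =>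
    simp only [List.length_cons, List.sum_cons]
    have h1 := h x (by simp)
    have h2 := ih (fun y hy => h y (by simp [hy]))
    omega

lemma count_zipper (A B : List ℕ) (h : A.length = B.length) :
    (zipper A B).count 0 = A.sum ∧ (zipper A B).count 1 = B.sum := by
  induction A generalizing B with
  | nil =>
    cases B with
    | nil => simp [zipper_nil]
    | cons b B => simp at h
  | cons a A ih =>
    cases B with
    | nil => simp at h
    | cons b B =>
      have := ih B (by simpa using h)
      simp [zipper_cons, List.count_append, List.count_replicate, this.1, this.2]

lemma zipper_take_prefix (m : ℕ) (A B : List ℕ) :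
    zipper (A.take m) (B.take m) <+: zipper A B := by
  induction A generalizing m B with
  | nil => simp [zipper_nil]
  | cons a A ih =>
    cases B with
    | nil => simp [zipper_nil']
    | cons b B =>
      cases m with
      | zero => simp [zipper_nil]
      | succ m =>
        simp only [List.take_succ_cons, zipper_cons]
        exact (List.prefix_append_right_inj _).2
          ((List.prefix_append_right_inj _).2 (ih m B))

lemma zipper_length (A B : List ℕ) (h : A.length = B.length) :
    (zipper A B).length = A.sum + B.sum := by
  induction A generalizing B with
  | nil =>
    cases B with
    | nil => simp [zipper_nil]
    | cons b B => simp at h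
  | cons a A ih =>
    cases B with
    | nil => simp at h
    | cons b B =>
      have := ih B (by simpa using h)
      simp [zipper_cons, this]
      ring

lemma count_lemma (A : List ℕ) : ∀ (B : List ℕ) (c ℓ : ℕ),
    A.length = B.length → (∀ x ∈ A, 0 < x) →
    (∀ m, 1 ≤ m → m ≤ A.length → (B.take m).sum < (A.take m).sum + c) →
    (1 ≤ c ∨ (1 ≤ ℓ ∧ A ≠ [])) →
    ((zipper A B).take ℓ).count 1 < ((zipper A B).take ℓ).count 0 + c := by
  induction A with
  | nil =>
    intro B c ℓ hlen hpos hdom hside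
    rcases hside with hc | ⟨_, hne⟩
    · simp [zipper_nil]; omega
    · exact absurd rfl hne
  | cons a A ih =>
    intro B c ℓ hlen hpos hdom hside
    cases B with
    | nil => simp at hlen
    | cons b B =>
      have ha : 0 < a := hpos a (by simp)
      have hab : b < a + c := by
        have := hdom 1 le_rfl (by simp)
        simpa using this
      have key : ∀ ℓ', ((zipper A B).take ℓ').count 1 <
          ((zipper A B).take ℓ').count 0 + (c + a - b) := by
        intro ℓ'
        refine ih B (c + a - b) ℓ' (by simpa using hlen)
          (fun x hx => hpos x (by simp [hx])) ?_ (Or.inl (by omega))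
        intro m hm hmle
        have := hdom (m + 1) (by omega) (by simpa using Nat.succ_le_succ hmle)
        simp only [List.take_succ_cons, List.sum_cons] at this
        omega
      rw [zipper_cons]
      rw [List.take_append, List.take_append]
      simp only [List.count_append, List.take_replicate, List.count_replicate,
        List.length_replicate]
      have h01 : ((0 : ℕ) == 1) = false := by decide
      have h10 : ((1 : ℕ) == 0) = false := by decide
      simp only [h01, h10, beq_self_eq_true, if_true, Bool.false_eq_true, if_false]
      by_cases hcase : a + b < ℓ
      · have hk := key (ℓ - a - b)
        omega
      · have h0 : ℓ - a - b = 0 := by omega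
        rw [h0]
        simp only [List.take_zero, List.count_nil]
        omega

theorem partial_sums_iff_prefix_dominance (k i : ℕ) (A B : List ℕ) (hi : 1 ≤ i)
    (hA : IsComposition (k + 1) i A) (hA1 : 2 ≤ A.headI)
    (hB : IsComposition k i B) :
    (∀ m, 1 ≤ m → m ≤ i → (B.take m).sum < (A.take m).sum) ↔
    (∀ ℓ, 1 ≤ ℓ → ℓ < 2 * k + 1 →
      ((zipper A B).take ℓ).count 1 < ((zipper A B).take ℓ).count 0) := by
  obtain ⟨hAlen, hAsum, hApos⟩ := hA
  obtain ⟨hBlen, hBsum, hBpos⟩ := hB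
  have hAne : A ≠ [] := by
    intro h; rw [h] at hAlen; simp at hAlen; omega
  constructor
  · intro hdom ℓ hℓ1 hℓ2
    have := count_lemma A B 0 ℓ (by rw [hAlen, hBlen])
      hApos (fun m hm hmle => by simpa using hdom m hm (by omega))
      (Or.inr ⟨hℓ1, hAne⟩)
    simpa using this
  · intro hcnt m hm hmi
    rcases eq_or_lt_of_le hmi with rfl | hmlt
    · rw [List.take_of_length_le (le_of_eq hAlen),
        List.take_of_length_le (le_of_eq hBlen), hAsum, hBsum]
      omega
    · -- use the block boundary prefix
      set P := zipper (A.take m) (B.take m) with hP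
      have hlen' : (A.take m).length = (B.take m).length := by
        rw [List.length_take, List.length_take, hAlen, hBlen]
      have hcount := count_zipper (A.take m) (B.take m) hlen'
      have hpre := zipper_take_prefix m A B
      have htake : (zipper A B).take P.length = P :=
        (List.prefix_iff_eq_take.1 hpre).symm
      have hPlen : P.length = (A.take m).sum + (B.take m).sum :=
        zipper_length _ _ hlen'
      have htpos : ∀ x ∈ A.take m, 0 < x := fun x hx => hApos x (List.mem_of_mem_take hx)
      have hdpos : ∀ x ∈ A.drop m, 0 < x := fun x hx => hApos x (List.mem_of_mem_drop hx)
      have h1 : 1 ≤ P.length := by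
        have := length_le_sum (A.take m) htpos
        rw [List.length_take, hAlen] at this
        omega
      have h2 : P.length < 2 * k + 1 := by
        have hd := length_le_sum (A.drop m) hdpos
        rw [List.length_drop, hAlen] at hd
        have hsA := List.sum_take_add_sum_drop A m
        have hsB := List.sum_take_add_sum_drop B m
        omega
      have := hcnt P.length h1 h2
      rw [htake] at this
      rw [hcount.1, hcount.2] at this
      exact this
end

section
/- The number of pairs (A, B) with A a composition of k+1 into i parts with first part ≥ 2 and B a composition of k into i parts such that all partial sums Σ_{j=1}^m (a_j - b_j), m = 1, ..., i, are positive, summed over all i from 1 to k, equals the Catalan number C_k = C(2k, k)/(k+1). -/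
open List DyckStep

/-- Zippering of two compositions into a word. -/
def zipword : List ℕ → List ℕ → List DyckStep
  | a :: A, b :: B => (replicate a U ++ replicate b D) ++ zipword A B
  | _, _ => []

lemma zipword_nil (B : List ℕ) : zipword [] B = [] := by cases B <;> rfl

lemma count_U_zipword : ∀ A B : List ℕ, A.length = B.length →
    (zipword A B).count U = A.sum
  | [], [], _ => by simp [zipword]
  | a :: A, b :: B, h => by
    simp only [zipword, count_append, count_replicate, sum_cons]
    rw [count_U_zipword A B (by simpa using h)]
    simp

lemma count_D_zipword : ∀ A B : List ℕ, A.length = B.length →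
    (zipword A B).count D = B.sum
  | [], [], _ => by simp [zipword]
  | a :: A, b :: B, h => by
    simp only [zipword, count_append, count_replicate, sum_cons]
    rw [count_D_zipword A B (by simpa using h)]
    simp

lemma count_take_append (l m : List DyckStep) (n : ℕ) (x : DyckStep) :
    (take n (l ++ m)).count x = (take n l).count x + (take (n - l.length) m).count x := by
  rw [take_append, count_append]

lemma count_take_block (a b n : ℕ) (w : List DyckStep) :
    (take n ((replicate a U ++ replicate b D) ++ w)).count D
      = min (n - a) b + (take (n - (a + b)) w).count D ∧
    (take n ((replicate a U ++ replicate b D) ++ w)).count U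
      = min n a + (take (n - (a + b)) w).count U := by
  constructor <;>
  · rw [count_take_append, count_take_append]
    simp [take_replicate, count_replicate, length_append]

lemma prefix_fwd : ∀ (A B : List ℕ) (u d : ℕ), A.length = B.length →
    (∀ n, d + ((zipword A B).take n).count D ≤ u + ((zipword A B).take n).count U) →
    ∀ m ≤ A.length, d + (B.take m).sum ≤ u + (A.take m).sum
  | [], [], u, d, _, h => by
    intro m _; simpa using h 0
  | a :: A, b :: B, u, d, hl, h => by
    have hl' : A.length = B.length := by simpa using hl
    intro m hm
    match m with
    | 0 => simpa using h 0
    | Nat.succ m =>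
      have key : ∀ n, (d + b) + ((zipword A B).take n).count D
          ≤ (u + a) + ((zipword A B).take n).count U := by
        intro n
        have := h (n + (a + b))
        rw [zipword, (count_take_block a b _ _).1, (count_take_block a b _ _).2,
          Nat.add_sub_cancel] at this
        omega
      have := prefix_fwd A B (u + a) (d + b) hl' key m (by simpa using hm)
      simp only [take_succ_cons, sum_cons]
      omega

lemma prefix_bwd : ∀ (A B : List ℕ) (u d : ℕ), A.length = B.length →
    (∀ m ≤ A.length, d + (B.take m).sum ≤ u + (A.take m).sum) →
    ∀ n, d + ((zipword A B).take n).count D ≤ u + ((zipword A B).take n).count U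
  | [], [], u, d, _, h => by
    intro n; have := h 0 (by simp); simpa [zipword] using this
  | a :: A, b :: B, u, d, hl, h => by
    have hl' : A.length = B.length := by simpa using hl
    intro n
    rw [zipword, (count_take_block a b _ _).1, (count_take_block a b _ _).2]
    have h0 : d ≤ u := by simpa using h 0 (by simp)
    have h1 : d + b ≤ u + a := by simpa using h 1 (by simp)
    rcases le_or_gt n (a + b) with hn | hn
    · have : (take (n - (a + b)) (zipword A B)) = [] := by
        rw [Nat.sub_eq_zero_of_le hn, take_zero]
      rw [this]; simp only [count_nil]; omega
    · have := prefix_bwd A B (u + a) (d + b) hl'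
        (fun m hm => by
          have := h (m + 1) (by simpa using Nat.succ_le_succ hm)
          simpa [Nat.add_assoc] using this) (n - (a + b))
      omega

lemma replicate_cancel (s : DyckStep) : ∀ (a₁ a₂ : ℕ) (l₁ l₂ : List DyckStep),
    l₁.head? ≠ some s → l₂.head? ≠ some s →
    replicate a₁ s ++ l₁ = replicate a₂ s ++ l₂ → a₁ = a₂ ∧ l₁ = l₂
  | 0, 0, l₁, l₂, _, _, h => ⟨rfl, by simpa using h⟩
  | 0, a₂ + 1, l₁, l₂, h₁, _, h => by
    exfalso; apply h₁
    rw [replicate_succ] at h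
    simp only [replicate, nil_append] at h
    rw [h]; simp
  | a₁ + 1, 0, l₁, l₂, _, h₂, h => by
    exfalso; apply h₂
    rw [replicate_succ] at h
    simp only [replicate, nil_append] at h
    rw [← h]; simp
  | a₁ + 1, a₂ + 1, l₁, l₂, h₁, h₂, h => by
    rw [replicate_succ, replicate_succ, cons_append, cons_append, cons.injEq] at h
    have := replicate_cancel s a₁ a₂ l₁ l₂ h₁ h₂ h.2
    exact ⟨by omega, this.2⟩

lemma zipword_ne_nil (a b : ℕ) (A B : List ℕ) (ha : 0 < a) :
    zipword (a :: A) (b :: B) ≠ [] := by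
  rw [zipword]
  simp only [ne_eq, append_eq_nil_iff, append_eq_nil_iff, replicate_eq_nil_iff]
  omega

lemma head?_replicate_append (a : ℕ) (s : DyckStep) (l : List DyckStep) (ha : 0 < a) :
    (replicate a s ++ l).head? = some s := by
  cases a with
  | zero => omega
  | succ a => rw [replicate_succ]; rfl

lemma zipword_inj : ∀ (A₁ B₁ A₂ B₂ : List ℕ), A₁.length = B₁.length → A₂.length = B₂.length →
    (∀ x ∈ A₁, 0 < x) → (∀ x ∈ B₁, 0 < x) → (∀ x ∈ A₂, 0 < x) → (∀ x ∈ B₂, 0 < x) →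
    zipword A₁ B₁ = zipword A₂ B₂ → A₁ = A₂ ∧ B₁ = B₂
  | [], [], [], [], _, _, _, _, _, _, _ => ⟨rfl, rfl⟩
  | [], [], a₂ :: A₂, b₂ :: B₂, _, _, _, _, hA₂, _, h => by
    exact absurd h.symm (zipword_ne_nil a₂ b₂ A₂ B₂ (hA₂ _ mem_cons_self))
  | a₁ :: A₁, b₁ :: B₁, [], [], _, _, hA₁, _, _, _, h => by
    exact absurd h (zipword_ne_nil a₁ b₁ A₁ B₁ (hA₁ _ mem_cons_self))
  | a₁ :: A₁, b₁ :: B₁, a₂ :: A₂, b₂ :: B₂, hl₁, hl₂, hA₁, hB₁, hA₂, hB₂, h => by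
    rw [zipword, zipword, append_assoc, append_assoc] at h
    have hb₁ : 0 < b₁ := hB₁ _ mem_cons_self
    have hb₂ : 0 < b₂ := hB₂ _ mem_cons_self
    have h1 := replicate_cancel U a₁ a₂ _ _
      (by rw [head?_replicate_append _ _ _ hb₁]; simp)
      (by rw [head?_replicate_append _ _ _ hb₂]; simp) h
    have h2 := replicate_cancel D b₁ b₂ (zipword A₁ B₁) (zipword A₂ B₂)
      ?_ ?_ h1.2
    · have := zipword_inj A₁ B₁ A₂ B₂ (by simpa using hl₁) (by simpa using hl₂)
        (fun x hx => hA₁ x (mem_cons_of_mem _ hx)) (fun x hx => hB₁ x (mem_cons_of_mem _ hx))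
        (fun x hx => hA₂ x (mem_cons_of_mem _ hx)) (fun x hx => hB₂ x (mem_cons_of_mem _ hx))
        h2.2
      refine ⟨by rw [h1.1, this.1], by rw [h2.1, this.2]⟩
    · match A₁, B₁, hl₁ with
      | [], [], _ => simp [zipword]
      | a :: A, b :: B, _ =>
        rw [zipword, append_assoc, head?_replicate_append _ _ _ (hA₁ _ (by simp))]; simp
    · match A₂, B₂, hl₂ with
      | [], [], _ => simp [zipword]
      | a :: A, b :: B, _ =>
        rw [zipword, append_assoc, head?_replicate_append _ _ _ (hA₂ _ (by simp))]; simp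

lemma zipword_decomp : ∀ (n : ℕ) (l : List DyckStep), l.length ≤ n →
    (∀ h : l ≠ [], l.head h = U) → (∀ h : l ≠ [], l.getLast h = D) →
    ∃ A B : List ℕ, A.length = B.length ∧ (∀ x ∈ A, 0 < x) ∧ (∀ x ∈ B, 0 < x) ∧
      zipword A B = l := by
  intro n
  induction n with
  | zero =>
    intro l hl _ _
    have : l = [] := by
      cases l with
      | nil => rfl
      | cons a t => simp at hl
    exact ⟨[], [], by simp [this, zipword]⟩
  | succ n ih =>
    intro l hl hhead hlast
    rcases eq_or_ne l [] with rfl | hne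
    · exact ⟨[], [], by simp [zipword]⟩
    · set t := l.takeWhile (· == U) with ht
      set r := l.dropWhile (· == U) with hr
      have htd : t ++ r = l := takeWhile_append_dropWhile
      have htrep : t = replicate t.length U :=
        eq_replicate_iff.2 ⟨rfl, fun b hb => by simpa using mem_takeWhile_imp hb⟩
      have hlastD : l.getLast? = some D := by
        rw [getLast?_eq_getLast hne, hlast hne]
      have htne : t ≠ [] := by
        obtain ⟨x, l', rfl⟩ := exists_cons_of_ne_nil hne
        have hx : x = U := by simpa using hhead (by simp)
        rw [ht, hx, takeWhile_cons_of_pos (by simp)]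
        simp
      have hrne : r ≠ [] := by
        intro hrnil
        rw [hrnil, append_nil] at htd
        rw [← htd, htrep, getLast?_replicate] at hlastD
        have hl0 : t.length ≠ 0 := fun h0 => htne (length_eq_zero_iff.mp h0)
        simp only [hl0, if_false, Option.some.injEq] at hlastD
        exact absurd hlastD (by simp)
      have hrhead : r.head hrne = D := by
        have h1 : (r.head hrne == U) = false := head_dropWhile_not (· == U) (l := l) (hr ▸ hrne)
        exact (DyckStep.dichotomy _).resolve_left (fun hU => by rw [hU] at h1; simp at h1)
      have hrheadq : r.head? = some D := by rw [head?_eq_head hrne, hrhead]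
      set t2 := r.takeWhile (· == D) with ht2
      set s := r.dropWhile (· == D) with hs
      have htd2 : t2 ++ s = r := takeWhile_append_dropWhile
      have ht2rep : t2 = replicate t2.length D :=
        eq_replicate_iff.2 ⟨rfl, fun b hb => by simpa using mem_takeWhile_imp hb⟩
      have ht2ne : t2 ≠ [] := by
        obtain ⟨x, r', hxr⟩ := exists_cons_of_ne_nil hrne
        have hx : x = D := by
          rw [hxr] at hrheadq
          simpa using hrheadq
        rw [ht2, hxr, hx, takeWhile_cons_of_pos (by simp)]
        simp
      have hshead : ∀ hsne : s ≠ [], s.head hsne = U := by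
        intro hsne
        have h1 : (s.head hsne == D) = false := head_dropWhile_not (· == D) (l := r) (hs ▸ hsne)
        exact (DyckStep.dichotomy _).resolve_right (fun hD => by rw [hD] at h1; simp at h1)
      have hslast : ∀ hsne : s ≠ [], s.getLast hsne = D := by
        intro hsne
        have hls : l = (t ++ t2) ++ s := by rw [append_assoc, htd2, htd]
        rw [hls, getLast?_append, getLast?_eq_getLast hsne] at hlastD
        simpa using hlastD
      have hslen : s.length ≤ n := by
        have h1 : t.length + t2.length + s.length = l.length := by
          rw [← htd, ← htd2, length_append, length_append]
          omega
        have : 0 < t.length := length_pos_iff.2 htne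
        omega
      obtain ⟨A, B, hAB, hApos, hBpos, hzip⟩ := ih s hslen hshead hslast
      refine ⟨t.length :: A, t2.length :: B, by simpa using hAB, ?_, ?_, ?_⟩
      · intro x hx
        rcases mem_cons.1 hx with rfl | hx
        · exact length_pos_iff.2 htne
        · exact hApos x hx
      · intro x hx
        rcases mem_cons.1 hx with rfl | hx
        · exact length_pos_iff.2 ht2ne
        · exact hBpos x hx
      · rw [zipword, hzip, ← htrep, ← ht2rep, append_assoc, htd2, htd]

lemma length_le_sum_of_pos : ∀ l : List ℕ, (∀ x ∈ l, 0 < x) → l.length ≤ l.sum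
  | [], _ => le_refl _
  | a :: l, h => by
    have := length_le_sum_of_pos l (fun x hx => h x (mem_cons_of_mem _ hx))
    have ha := h a mem_cons_self
    simp only [length_cons, sum_cons]
    omega

def GoodPair (k : ℕ) (P : List ℕ × List ℕ) : Prop :=
  ∃ i, 1 ≤ i ∧ i ≤ k ∧ IsComposition (k + 1) i P.1 ∧ 2 ≤ P.1.headI ∧
    IsComposition k i P.2 ∧
    ∀ m, 1 ≤ m → m ≤ i → (P.2.take m).sum < (P.1.take m).sum

lemma goodPair_spec (k : ℕ) (P : List ℕ × List ℕ) (h : GoodPair k P) :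
    ∃ a t, P.1 = a :: t ∧ 2 ≤ a ∧
      ((a - 1) :: t).length = P.2.length ∧ (∀ x ∈ (a - 1) :: t, 0 < x) ∧
      (∀ x ∈ P.2, 0 < x) ∧ ((a - 1) :: t).sum = k ∧ P.2.sum = k ∧
      ∀ m ≤ ((a - 1) :: t).length, (P.2.take m).sum ≤ (((a - 1) :: t).take m).sum := by
  obtain ⟨i, hi1, hik, ⟨hl1, hs1, hp1⟩, hhead, ⟨hl2, hs2, hp2⟩, hball⟩ := h
  match hP1 : P.1, hl1 with
  | [], hl1 => exfalso; simp at hl1; omega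
  | a :: t, hl1 =>
    have hhead' : 2 ≤ a := by rw [hP1] at hhead; simpa using hhead
    have hsum : a + t.sum = k + 1 := by rw [hP1] at hs1; simpa using hs1
    refine ⟨a, t, rfl, hhead', by simp at hl1 ⊢; omega, ?_, hp2, by simp; omega, hs2, ?_⟩
    · intro x hx
      rcases mem_cons.1 hx with rfl | hx
      · omega
      · exact hp1 x (by rw [hP1]; exact mem_cons_of_mem _ hx)
    · intro m hm
      match m with
      | 0 => simp
      | m + 1 =>
        have := hball (m + 1) (by omega) (by simp at hl1 hm ⊢; omega)
        rw [hP1] at this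
        simp only [take_succ_cons, sum_cons] at this ⊢
        omega

def toDyck (k : ℕ) (x : {P : List ℕ × List ℕ // GoodPair k P}) : DyckWord where
  toList := zipword ((x.1.1.headI - 1) :: x.1.1.tail) x.1.2
  count_U_eq_count_D := by
    obtain ⟨a, t, hP1, ha, hlen, hposA, hposB, hsA, hsB, _⟩ := goodPair_spec k x.1 x.2
    rw [hP1]
    simp only [headI, tail_cons]
    rw [count_U_zipword _ _ hlen, count_D_zipword _ _ hlen, hsA, hsB]
  count_D_le_count_U := by
    obtain ⟨a, t, hP1, ha, hlen, hposA, hposB, hsA, hsB, hball⟩ := goodPair_spec k x.1 x.2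
    rw [hP1]
    simp only [headI, tail_cons]
    intro n
    simpa using prefix_bwd _ _ 0 0 hlen (by simpa using hball) n

lemma toDyck_semilength (k : ℕ) (x : {P : List ℕ × List ℕ // GoodPair k P}) :
    (toDyck k x).semilength = k := by
  obtain ⟨a, t, hP1, ha, hlen, hposA, hposB, hsA, hsB, _⟩ := goodPair_spec k x.1 x.2
  show (zipword ((x.1.1.headI - 1) :: x.1.1.tail) x.1.2).count U = k
  rw [hP1]
  simp only [headI, tail_cons]
  rw [count_U_zipword _ _ hlen, hsA]

lemma toDyck_bijective (k : ℕ) (hk : 0 < k) :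
    Function.Bijective (fun x : {P : List ℕ × List ℕ // GoodPair k P} =>
      (⟨toDyck k x, toDyck_semilength k x⟩ : {p : DyckWord // p.semilength = k})) := by
  constructor
  · rintro x y hxy
    simp only [Subtype.mk.injEq] at hxy
    have hlist : (toDyck k x).toList = (toDyck k y).toList := by rw [hxy]
    obtain ⟨a₁, t₁, hP1, ha₁, hlen₁, hposA₁, hposB₁, _, _, _⟩ := goodPair_spec k x.1 x.2
    obtain ⟨a₂, t₂, hP2, ha₂, hlen₂, hposA₂, hposB₂, _, _, _⟩ := goodPair_spec k y.1 y.2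
    have hx' : (toDyck k x).toList = zipword ((a₁ - 1) :: t₁) x.1.2 := by
      show zipword _ _ = _; rw [hP1]; simp only [headI, tail_cons]
    have hy' : (toDyck k y).toList = zipword ((a₂ - 1) :: t₂) y.1.2 := by
      show zipword _ _ = _; rw [hP2]; simp only [headI, tail_cons]
    rw [hx', hy'] at hlist
    obtain ⟨hA, hB⟩ := zipword_inj _ _ _ _ hlen₁ hlen₂ hposA₁ hposB₁ hposA₂ hposB₂ hlist
    have h1 : a₁ - 1 = a₂ - 1 := by injection hA
    have h2 : t₁ = t₂ := by injection hA
    have ha : a₁ = a₂ := by omega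
    apply Subtype.ext
    apply Prod.ext
    · rw [hP1, hP2, ha, h2]
    · exact hB
  · rintro ⟨p, hp⟩
    have hlen2k : p.toList.length = 2 * k := by
      rw [← p.two_mul_semilength_eq_length, hp]
    have hpne : p.toList ≠ [] := by
      intro h
      rw [h] at hlen2k
      simp at hlen2k
      omega
    obtain ⟨A, B, hAB, hApos, hBpos, hzip⟩ :=
      zipword_decomp p.toList.length p.toList (le_refl _)
        (fun h => p.head_eq_U h) (fun h => p.getLast_eq_D h)
    have hcU : A.sum = k := by
      rw [← count_U_zipword A B hAB, hzip]
      exact hp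
    have hcD : B.sum = k := by
      rw [← count_D_zipword A B hAB, hzip, ← DyckWord.semilength_eq_count_D]
      exact hp
    match hA : A, hAB, hApos, hcU with
    | [], hAB, _, hcU =>
      exfalso
      apply hpne
      rw [← hzip]
      exact zipword_nil B
    | a :: t, hAB, hApos, hcU =>
      have ha : 0 < a := hApos a mem_cons_self
      have hsums : ∀ m ≤ (a :: t).length, (B.take m).sum ≤ ((a :: t).take m).sum := by
        have hpre : ∀ n, 0 + ((zipword (a :: t) B).take n).count D
            ≤ 0 + ((zipword (a :: t) B).take n).count U := by
          intro n
          have h2 := p.count_D_le_count_U n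
          rw [← hzip] at h2
          simpa using h2
        intro m hm
        simpa using prefix_fwd (a :: t) B 0 0 hAB hpre m hm
      have hgood : GoodPair k ((a + 1) :: t, B) := by
        refine ⟨B.length, ?_, ?_, ⟨?_, ?_, ?_⟩, by simp [headI]; omega, ⟨rfl, hcD, hBpos⟩, ?_⟩
        · rw [← hAB]; simp
        · calc B.length ≤ B.sum := length_le_sum_of_pos B hBpos
            _ = k := hcD
        · rw [← hAB]; simp
        · simp only [sum_cons] at hcU ⊢; omega
        · intro x hx
          rcases mem_cons.1 hx with rfl | hx
          · omega
          · exact hApos x (mem_cons_of_mem _ hx)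
        · intro m hm1 hm2
          match m with
          | m + 1 =>
            have h1 := hsums (m + 1) (by simp at hAB ⊢; omega)
            simp only [take_succ_cons, sum_cons] at h1 ⊢
            omega
      refine ⟨⟨((a + 1) :: t, B), hgood⟩, ?_⟩
      apply Subtype.ext
      apply DyckWord.ext
      show zipword _ _ = p.toList
      simp only [headI, tail_cons]
      rw [Nat.add_sub_cancel, hzip]

theorem positive_pairs_card_catalan (k : ℕ) (hk : 0 < k) :
    Nat.card {P : List ℕ × List ℕ //
        ∃ i, 1 ≤ i ∧ i ≤ k ∧ IsComposition (k + 1) i P.1 ∧ 2 ≤ P.1.headI ∧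
          IsComposition k i P.2 ∧
          ∀ m, 1 ≤ m → m ≤ i → (P.2.take m).sum < (P.1.take m).sum} =
      Nat.choose (2 * k) k / (k + 1) := by
  have h1 : Nat.choose (2 * k) k / (k + 1) = catalan k := by
    rw [catalan_eq_centralBinom_div]
    rfl
  rw [h1, ← DyckWord.card_dyckWord_semilength_eq_catalan, ← Nat.card_eq_fintype_card]
  exact Nat.card_congr (Equiv.ofBijective _ (toDyck_bijective k hk))
end

section
/- Define t_i^k(A, B) = 1 if all partial sums Σ_{j=1}^m (a_j - b_j), m = 1, ..., i, are positive, and 0 otherwise, where A ranges over compositions of k+1 into i parts with first part ≥ 2 and B over compositions of k into i parts, both listed in descending lexicographic order indexed by p and q respectively. Then for 1 < i < k and all p > q one has t_i^k(p, q) = 0, i.e. the matrix T_i^k is upper triangular. -/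
/-- Row labels of `T_i^k`: compositions of `k+1` into `i` parts with first part `≥ 2`. -/
def IsRowComp (k i : ℕ) (l : List ℕ) : Prop :=
  IsComposition (k + 1) i l ∧ 2 ≤ l.headI

/-- The (1-based) index of the row labelled `A` in descending lexicographic order:
one plus the number of row labels strictly greater than `A`. -/
noncomputable def rowIdx (k i : ℕ) (A : List ℕ) : ℕ :=
  1 + Nat.card {C : List ℕ // IsRowComp k i C ∧ List.Lex (· < ·) A C}

/-- The (1-based) index of the column labelled `B` in descending lexicographic order. -/
noncomputable def colIdx (k i : ℕ) (B : List ℕ) : ℕ :=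
  1 + Nat.card {C : List ℕ // IsComposition k i C ∧ List.Lex (· < ·) B C}



/-- decrement head -/
def dec (l : List ℕ) : List ℕ := (l.headI - 1) :: l.tail

lemma lex_dec {A C : List ℕ} (hA : 1 ≤ A.headI) (h : List.Lex (· < ·) A C) :
    List.Lex (· < ·) (dec A) (dec C) := by
  cases h with
  | nil => simp at hA
  | rel hr => simp only [dec, List.headI, List.tail]; exact List.Lex.rel (by simp at hA; omega)
  | cons h' => simp only [dec, List.headI, List.tail]; exact List.Lex.cons h'

lemma lex_le_of_partial (B A : List ℕ) (h : B.length = A.length)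
    (hdom : ∀ m, (B.take m).sum ≤ (A.take m).sum) :
    B = A ∨ List.Lex (· < ·) B A := by
  induction A generalizing B with
  | nil => left; exact List.length_eq_zero_iff.mp h
  | cons a A' ih =>
    obtain ⟨b, B', rfl⟩ : ∃ b B', B = b :: B' := by
      cases B with
      | nil => simp at h
      | cons b B' => exact ⟨b, B', rfl⟩
    have h1 := hdom 1
    simp at h1
    rcases lt_or_eq_of_le h1 with hlt | heq
    · right; exact List.Lex.rel hlt
    · subst heq
      have hdom' : ∀ m, (B'.take m).sum ≤ (A'.take m).sum := by
        intro m
        have := hdom (m + 1)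
        simpa using this
      rcases ih B' (by simpa using h) hdom' with rfl | hlex
      · left; rfl
      · right; exact List.Lex.cons hlex

lemma comp_finite (n i : ℕ) : Finite {C : List ℕ // C.length = i ∧ C.sum = n} := by
  apply Finite.of_injective (β := Fin i → Fin (n + 1))
    (f := fun C => fun j => ⟨C.val.get (j.cast C.prop.1.symm), by
      have hm : C.val.get (j.cast C.prop.1.symm) ∈ C.val := List.get_mem _ _
      have h2 := List.single_le_sum (fun x _ => Nat.zero_le x) _ hm
      have := C.prop.2
      omega⟩)
  intro C D h
  ext1
  apply List.ext_get (C.prop.1.trans D.prop.1.symm)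
  intro m h1 h2
  have := congrFun h ⟨m, C.prop.1 ▸ h1⟩
  simpa using this

lemma lex_trans' {a b c : List ℕ} (h1 : List.Lex (· < ·) a b) (h2 : List.Lex (· < ·) b c) :
    List.Lex (· < ·) a c := List.lex_trans (fun h1 h2 => Nat.lt_trans h1 h2) h1 h2

lemma key (i : ℕ) (hi : 1 ≤ i) (A B C : List ℕ) (hlA : A.length = i) (hlB : B.length = i)
    (hAh : 2 ≤ A.headI)
    (hdom : ∀ m, 1 ≤ m → m ≤ i → (B.take m).sum < (A.take m).sum)
    (hAC : List.Lex (· < ·) A C) : List.Lex (· < ·) B (dec C) := by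
  have h1 : List.Lex (· < ·) (dec A) (dec C) := lex_dec (by omega) hAC
  have hAne : A ≠ [] := by intro h; subst h; simp at hlA; omega
  obtain ⟨a, A', rfl⟩ := List.exists_cons_of_ne_nil hAne
  have ha : 2 ≤ a := by simpa using hAh
  have hlA' : A'.length + 1 = i := by simpa using hlA
  have hlen : B.length = (dec (a :: A')).length := by simp [dec]; omega
  have hdom2 : ∀ m, (B.take m).sum ≤ ((dec (a :: A')).take m).sum := by
    intro m
    rcases Nat.eq_zero_or_pos m with rfl | hm
    · simp
    · obtain ⟨n, hn1, hni, hBm, hDm⟩ : ∃ n, 1 ≤ n ∧ n ≤ i ∧ B.take m = B.take n ∧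
          (dec (a :: A')).take m = (dec (a :: A')).take n := by
        by_cases hmi : m ≤ i
        · exact ⟨m, hm, hmi, rfl, rfl⟩
        · refine ⟨i, hi, le_refl _, ?_, ?_⟩
          · rw [List.take_of_length_le (by omega), List.take_of_length_le (by omega)]
          · rw [List.take_of_length_le (by simp [dec]; omega),
              List.take_of_length_le (by simp [dec]; omega)]
      rw [hBm, hDm]
      have hd := hdom n hn1 hni
      cases n with
      | zero => omega
      | succ n' =>
        simp only [dec, List.headI_cons, List.tail_cons, List.take_succ_cons,
          List.sum_cons] at hd ⊢
        omega
  rcases lex_le_of_partial B (dec (a :: A')) hlen hdom2 with heq | h2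
  · rw [heq]; exact h1
  · exact lex_trans' h2 h1

theorem T_upper_triangular (k i : ℕ) (hi : 1 < i) (hik : i < k) (A B : List ℕ)
    (hA : IsRowComp k i A) (hB : IsComposition k i B)
    (hpq : colIdx k i B < rowIdx k i A) :
    ∃ m, 1 ≤ m ∧ m ≤ i ∧ (A.take m).sum ≤ (B.take m).sum := by
  by_contra hcon
  push_neg at hcon
  haveI : Finite {C : List ℕ // IsComposition k i C ∧ List.Lex (· < ·) B C} := by
    haveI := comp_finite k i
    exact Finite.of_injective
      (fun C => (⟨C.1, C.2.1.1, C.2.1.2.1⟩ : {C : List ℕ // C.length = i ∧ C.sum = k}))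
      (by intro x y h; simp only [Subtype.mk.injEq] at h; exact Subtype.ext h)
  have key' : ∀ C : List ℕ, IsRowComp k i C ∧ List.Lex (· < ·) A C →
      IsComposition k i (dec C) ∧ List.Lex (· < ·) B (dec C) := by
    rintro C ⟨⟨⟨hlen, hsum, hpos⟩, hhead⟩, hlex⟩
    obtain ⟨c, t, rfl⟩ := List.exists_cons_of_ne_nil
      (show C ≠ [] by intro h; subst h; simp at hlen; omega)
    have hc : 2 ≤ c := by simpa using hhead
    have hlt : t.length + 1 = i := by simpa using hlen
    have hst : c + t.sum = k + 1 := by simpa using hsum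
    refine ⟨⟨?_, ?_, ?_⟩, ?_⟩
    · simp [dec]; omega
    · simp [dec]; omega
    · intro x hx
      simp only [dec, List.headI_cons, List.tail_cons, List.mem_cons] at hx
      rcases hx with rfl | hx
      · omega
      · exact hpos x (List.mem_cons_of_mem _ hx)
    · exact key i (by omega) A B (c :: t) hA.1.1 hB.1 hA.2 hcon hlex
  have hinj : Function.Injective
      (fun C : {C : List ℕ // IsRowComp k i C ∧ List.Lex (· < ·) A C} =>
        (⟨dec C.1, key' C.1 C.2⟩ : {C : List ℕ // IsComposition k i C ∧ List.Lex (· < ·) B C})) := by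
    rintro ⟨x, hx⟩ ⟨y, hy⟩ h
    simp only [Subtype.mk.injEq] at h ⊢
    obtain ⟨cx, tx, rfl⟩ := List.exists_cons_of_ne_nil
      (show x ≠ [] by intro hh; subst hh; have := hx.1.1.1; simp at this; omega)
    obtain ⟨cy, ty, rfl⟩ := List.exists_cons_of_ne_nil
      (show y ≠ [] by intro hh; subst hh; have := hy.1.1.1; simp at this; omega)
    have hcx : 2 ≤ cx := by simpa using hx.1.2
    have hcy : 2 ≤ cy := by simpa using hy.1.2
    simp only [dec, List.headI_cons, List.tail_cons, List.cons.injEq] at h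
    obtain ⟨h1, h2⟩ := h
    subst h2
    congr 1
    omega
  have hcard := Nat.card_le_card_of_injective _ hinj
  simp only [rowIdx, colIdx] at hpq
  omega
end

section
/- For k > 2, the tensor T_{k-1}^k equals the (k-1)×(k-1) upper triangular all-ones matrix, i.e. t_{k-1}^k(p,q) = 1 if and only if p ≤ q. -/
/-- List of length `n` (for `q ≤ n-1`, `n ≥ 1`) with a `2` at position `q` and `1`s elsewhere. -/
def ot (n q : ℕ) : List ℕ := List.replicate q 1 ++ 2 :: List.replicate (n - 1 - q) 1

/-- Row labels for `T_{k-1}^k`. -/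
def rowL (k p : ℕ) : List ℕ :=
  if p = 0 then 3 :: List.replicate (k - 2) 1 else 2 :: ot (k - 2) (p - 1)

lemma eq_replicate_of_sum_eq_length (l : List ℕ) (h : ∀ x ∈ l, 0 < x) (hs : l.sum = l.length) :
    l = List.replicate l.length 1 := by
  induction l with
  | nil => simp
  | cons a t ih =>
    have h1 := h a (by simp)
    have h2 := length_le_sum t (fun x hx => h x (by simp [hx]))
    simp only [List.sum_cons, List.length_cons] at hs ⊢
    have ha : a = 1 := by omega
    have ht : t.sum = t.length := by omega
    rw [ha, List.replicate_succ]
    exact congrArg (List.cons 1) (ih (fun x hx => h x (by simp [hx])) ht)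

lemma ot_succ (n q : ℕ) : ot n (q + 1) = 1 :: ot (n - 1) q := by
  simp only [ot, List.replicate_succ, List.cons_append]
  have h : n - 1 - (q + 1) = n - 1 - 1 - q := by omega
  rw [h]

lemma char_ot (l : List ℕ) (n : ℕ) (hlen : l.length = n) (hsum : l.sum = n + 1)
    (hpos : ∀ x ∈ l, 0 < x) : ∃ q, q ≤ n - 1 ∧ l = ot n q := by
  induction l generalizing n with
  | nil => simp only [List.sum_nil] at hsum; omega
  | cons a t ih =>
    have hposA := hpos a (by simp)
    have hpost : ∀ x ∈ t, 0 < x := fun x hx => hpos x (by simp [hx])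
    have hlt := length_le_sum t hpost
    simp only [List.length_cons, List.sum_cons] at hlen hsum
    rcases Nat.lt_or_ge a 2 with h2 | h2
    · have ha : a = 1 := by omega
      obtain ⟨q, hq, ht⟩ := ih (n - 1) (by omega) (by omega) hpost
      have htl : 1 ≤ t.length := by
        rw [ht]
        simp only [ot, List.length_append, List.length_replicate, List.length_cons]
        omega
      have hb : q + 1 ≤ n - 1 := by omega
      exact ⟨q + 1, hb, by rw [ha, ht, ot_succ]⟩
    · have ha : a = 2 := by omega
      have hts : t.sum = t.length := by omega
      refine ⟨0, by omega, ?_⟩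
      rw [ha, eq_replicate_of_sum_eq_length t hpost hts]
      simp only [ot, List.replicate_zero, List.nil_append, Nat.sub_zero]
      have hln : t.length = n - 1 := by omega
      rw [hln]

lemma lex_irrefl' (l : List ℕ) : ¬ List.Lex (· < ·) l l := by
  induction l with
  | nil => intro h; cases h
  | cons a t ih =>
    intro h
    cases h with
    | rel h => omega
    | cons h => exact ih h

lemma lex_ot (q : ℕ) : ∀ n q', q ≤ n - 1 → q' ≤ n - 1 →
    (List.Lex (· < ·) (ot n q) (ot n q') ↔ q' < q) := by
  induction q with
  | zero =>
    intro n q' hq hq'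
    constructor
    · intro h
      exfalso
      cases q' with
      | zero => exact lex_irrefl' _ h
      | succ s =>
        rw [ot_succ] at h
        simp only [ot, List.replicate_zero, List.nil_append] at h
        cases h with
        | rel h => omega
    · omega
  | succ s ih =>
    intro n q' hq hq'
    cases q' with
    | zero =>
      rw [ot_succ]
      simp only [ot, List.replicate_zero, List.nil_append]
      exact iff_of_true (List.Lex.rel (by omega)) (by omega)
    | succ s' =>
      rw [ot_succ, ot_succ]
      have hbd : s ≤ n - 1 - 1 := by omega
      have hbd' : s' ≤ n - 1 - 1 := by omega
      have hih := ih (n - 1) s' hbd hbd'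
      constructor
      · intro h
        cases h with
        | rel h => omega
        | cons h => have := hih.mp h; omega
      · intro h
        exact List.Lex.cons (hih.mpr (by omega))

lemma ot_inj (n q q' : ℕ) (hq : q ≤ n - 1) (hq' : q' ≤ n - 1) (h : ot n q = ot n q') :
    q = q' := by
  by_contra hne
  rcases Nat.lt_or_ge q q' with hlt | hge
  · have h2 := (lex_ot q' n q hq' hq).mpr hlt
    rw [h] at h2
    exact lex_irrefl' _ h2
  · have hlt : q' < q := by omega
    have h2 := (lex_ot q n q' hq hq').mpr hlt
    rw [← h] at h2
    exact lex_irrefl' _ h2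

lemma lex_row (k p p' : ℕ) (hk : 2 < k) (hp : p ≤ k - 2) (hp' : p' ≤ k - 2) :
    (List.Lex (· < ·) (rowL k p) (rowL k p') ↔ p' < p) := by
  rcases Nat.eq_zero_or_pos p with rfl | hpp
  · rcases Nat.eq_zero_or_pos p' with rfl | hpp'
    · exact iff_of_false (lex_irrefl' _) (by omega)
    · rw [rowL, rowL, if_pos rfl, if_neg (by omega)]
      constructor
      · intro h
        cases h with
        | rel h => omega
      · omega
  · rcases Nat.eq_zero_or_pos p' with rfl | hpp'
    · rw [rowL, rowL, if_neg (by omega), if_pos rfl]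
      exact iff_of_true (List.Lex.rel (by omega)) (by omega)
    · rw [rowL, rowL, if_neg (by omega), if_neg (by omega)]
      have h1 : p - 1 ≤ k - 2 - 1 := by omega
      have h2 : p' - 1 ≤ k - 2 - 1 := by omega
      have hlo := lex_ot (p - 1) (k - 2) (p' - 1) h1 h2
      constructor
      · intro h
        cases h with
        | rel h => omega
        | cons h => have := hlo.mp h; omega
      · intro h
        exact List.Lex.cons (hlo.mpr (by omega))

lemma rowL_inj (k p p' : ℕ) (hk : 2 < k) (hp : p ≤ k - 2) (hp' : p' ≤ k - 2)
    (h : rowL k p = rowL k p') : p = p' := by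
  by_contra hne
  rcases Nat.lt_or_ge p p' with hlt | hge
  · have h2 := (lex_row k p' p hk hp' hp).mpr hlt
    rw [h] at h2
    exact lex_irrefl' _ h2
  · have hlt : p' < p := by omega
    have h2 := (lex_row k p p' hk hp hp').mpr hlt
    rw [← h] at h2
    exact lex_irrefl' _ h2

lemma ot_pos (n q : ℕ) : ∀ x ∈ ot n q, 0 < x := by
  intro x hx
  simp only [ot, List.mem_append, List.mem_cons, List.mem_replicate] at hx
  rcases hx with h | h | h <;> omega

lemma ot_length (n q : ℕ) (hn : 1 ≤ n) (hq : q ≤ n - 1) : (ot n q).length = n := by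
  simp only [ot, List.length_append, List.length_replicate, List.length_cons]
  omega

lemma ot_sum (n q : ℕ) (hn : 1 ≤ n) (hq : q ≤ n - 1) : (ot n q).sum = n + 1 := by
  simp only [ot, List.sum_append, List.sum_cons, List.sum_replicate, smul_eq_mul, mul_one]
  omega

lemma comp_iff (k : ℕ) (hk : 2 < k) (B : List ℕ) :
    IsComposition k (k - 1) B ↔ ∃ q, q ≤ k - 2 ∧ B = ot (k - 1) q := by
  constructor
  · rintro ⟨hl, hs, hp⟩
    obtain ⟨q, hq, hB⟩ := char_ot B (k - 1) hl (by omega) hp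
    exact ⟨q, by omega, hB⟩
  · rintro ⟨q, hq, rfl⟩
    exact ⟨ot_length _ _ (by omega) (by omega),
      by rw [ot_sum _ _ (by omega) (by omega)]; omega, ot_pos _ _⟩

lemma row_iff (k : ℕ) (hk : 2 < k) (A : List ℕ) :
    IsRowComp k (k - 1) A ↔ ∃ p, p ≤ k - 2 ∧ A = rowL k p := by
  constructor
  · rintro ⟨⟨hl, hs, hp⟩, hh⟩
    cases A with
    | nil => simp at hl; omega
    | cons a t =>
      simp only [List.headI] at hh
      have hpost : ∀ x ∈ t, 0 < x := fun x hx => hp x (by simp [hx])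
      have hlt := length_le_sum t hpost
      simp only [List.length_cons, List.sum_cons] at hl hs
      rcases Nat.lt_or_ge a 3 with h2 | h2
      · have ha : a = 2 := by omega
        obtain ⟨q, hq, ht⟩ := char_ot t (k - 2) (by omega) (by omega) hpost
        refine ⟨q + 1, by omega, ?_⟩
        rw [rowL, if_neg (by omega), ha, ht]
        simp
      · have ha : a = 3 := by omega
        have hts : t.sum = t.length := by omega
        refine ⟨0, by omega, ?_⟩
        rw [rowL, if_pos rfl, ha, eq_replicate_of_sum_eq_length t hpost hts]
        have hln : t.length = k - 2 := by omega
        rw [hln]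
  · rintro ⟨p, hp, rfl⟩
    rcases Nat.eq_zero_or_pos p with rfl | hpp
    · rw [rowL, if_pos rfl]
      refine ⟨⟨?_, ?_, ?_⟩, ?_⟩
      · simp; omega
      · simp [List.sum_replicate]; omega
      · intro x hx
        simp only [List.mem_cons, List.mem_replicate] at hx
        rcases hx with h | h <;> omega
      · simp
    · rw [rowL, if_neg (by omega)]
      refine ⟨⟨?_, ?_, ?_⟩, ?_⟩
      · simp only [List.length_cons, ot_length (k - 2) (p - 1) (by omega) (by omega)]
        omega
      · simp only [List.sum_cons, ot_sum (k - 2) (p - 1) (by omega) (by omega)]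
        omega
      · intro x hx
        simp only [List.mem_cons] at hx
        rcases hx with rfl | h
        · omega
        · exact ot_pos _ _ x h
      · simp

lemma card_cols (k q : ℕ) (hk : 2 < k) (hq : q ≤ k - 2) :
    Nat.card {C : List ℕ // IsComposition k (k - 1) C ∧
      List.Lex (· < ·) (ot (k - 1) q) C} = q := by
  have hbij : Function.Bijective (fun j : Fin q =>
      (⟨ot (k - 1) j, (comp_iff k hk _).mpr ⟨j, by have := j.isLt; omega, rfl⟩,
        (lex_ot q (k - 1) j (by omega) (by have := j.isLt; omega)).mpr j.isLt⟩ :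
        {C : List ℕ // IsComposition k (k - 1) C ∧
          List.Lex (· < ·) (ot (k - 1) q) C})) := by
    constructor
    · intro j1 j2 h
      have h2 := congrArg Subtype.val h
      simp only at h2
      exact Fin.ext (ot_inj (k - 1) j1 j2 (by have := j1.isLt; omega)
        (by have := j2.isLt; omega) h2)
    · rintro ⟨C, hC, hlex⟩
      obtain ⟨q', hq', rfl⟩ := (comp_iff k hk C).mp hC
      have hlt : q' < q := (lex_ot q (k - 1) q' (by omega) (by omega)).mp hlex
      exact ⟨⟨q', hlt⟩, rfl⟩
  rw [← Nat.card_eq_of_bijective _ hbij]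
  simp

lemma card_rows (k p : ℕ) (hk : 2 < k) (hp : p ≤ k - 2) :
    Nat.card {C : List ℕ // IsRowComp k (k - 1) C ∧
      List.Lex (· < ·) (rowL k p) C} = p := by
  have hbij : Function.Bijective (fun j : Fin p =>
      (⟨rowL k j, (row_iff k hk _).mpr ⟨j, by have := j.isLt; omega, rfl⟩,
        (lex_row k p j hk hp (by have := j.isLt; omega)).mpr j.isLt⟩ :
        {C : List ℕ // IsRowComp k (k - 1) C ∧
          List.Lex (· < ·) (rowL k p) C})) := by
    constructor
    · intro j1 j2 h
      have h2 := congrArg Subtype.val h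
      simp only at h2
      exact Fin.ext (rowL_inj k j1 j2 hk (by have := j1.isLt; omega)
        (by have := j2.isLt; omega) h2)
    · rintro ⟨C, hC, hlex⟩
      obtain ⟨p', hp', rfl⟩ := (row_iff k hk C).mp hC
      have hlt : p' < p := (lex_row k p p' hk hp hp').mp hlex
      exact ⟨⟨p', hlt⟩, rfl⟩
  rw [← Nat.card_eq_of_bijective _ hbij]
  simp

lemma ot_take_sum (n q m : ℕ) (hq : q ≤ n - 1) (hm : m ≤ n) :
    ((ot n q).take m).sum = if q < m then m + 1 else m := by
  rcases Nat.lt_or_ge q m with h | h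
  · rw [if_pos h, ot, List.take_append, List.take_replicate]
    have h1 : min m q = q := by omega
    have h2 : m - (List.replicate q (1 : ℕ)).length = (m - q - 1) + 1 := by
      simp only [List.length_replicate]; omega
    rw [h1, h2, List.take_succ_cons, List.take_replicate]
    have h3 : min (m - q - 1) (n - 1 - q) = m - q - 1 := by omega
    rw [h3]
    simp only [List.sum_append, List.sum_cons, List.sum_replicate, smul_eq_mul, mul_one]
    omega
  · rw [if_neg (by omega), ot, List.take_append, List.take_replicate]
    have h1 : min m q = m := by omega
    have h2 : m - (List.replicate q (1 : ℕ)).length = 0 := by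
      simp only [List.length_replicate]; omega
    rw [h1, h2, List.take_zero, List.append_nil, List.sum_replicate]
    simp

lemma rowL_take_sum (k p m : ℕ) (hk : 2 < k) (hp : p ≤ k - 2) (hm1 : 1 ≤ m)
    (hm2 : m ≤ k - 1) :
    ((rowL k p).take m).sum = m + 1 + (if p < m then 1 else 0) := by
  obtain ⟨m', rfl⟩ : ∃ m', m = m' + 1 := ⟨m - 1, by omega⟩
  rcases Nat.eq_zero_or_pos p with rfl | hpp
  · rw [rowL, if_pos rfl, List.take_succ_cons, List.take_replicate, if_pos (by omega)]
    have h1 : min m' (k - 2) = m' := by omega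
    rw [h1]
    simp only [List.sum_cons, List.sum_replicate, smul_eq_mul, mul_one]
    omega
  · rw [rowL, if_neg (by omega), List.take_succ_cons, List.sum_cons,
      ot_take_sum (k - 2) (p - 1) m' (by omega) (by omega)]
    split_ifs <;> omega

/-- For `k > 2`, `T_{k-1}^k` is the upper triangular all-ones matrix. -/
theorem T_k_minus_one_upper_triangular_ones (k : ℕ) (hk : 2 < k) (A B : List ℕ)
    (hA : IsRowComp k (k - 1) A) (hB : IsComposition k (k - 1) B) :
    (∀ m, 1 ≤ m → m ≤ k - 1 → (B.take m).sum < (A.take m).sum) ↔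
      rowIdx k (k - 1) A ≤ colIdx k (k - 1) B := by
  obtain ⟨p, hp, rfl⟩ := (row_iff k hk A).mp hA
  obtain ⟨q, hq, rfl⟩ := (comp_iff k hk B).mp hB
  rw [rowIdx, colIdx, card_rows k p hk hp, card_cols k q hk hq]
  constructor
  · intro h
    have h1 := h (q + 1) (by omega) (by omega)
    rw [rowL_take_sum k p (q + 1) hk hp (by omega) (by omega),
      ot_take_sum (k - 1) q (q + 1) (by omega) (by omega)] at h1
    split_ifs at h1 <;> omega
  · intro h m hm1 hm2
    rw [rowL_take_sum k p m hk hp hm1 hm2,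
      ot_take_sum (k - 1) q m (by omega) (by omega)]
    split_ifs <;> omega
end

section
/- For every k > 1 and 1 ≤ ℓ ≤ k, the matrices T_ℓ^k and T_{k+1-ℓ}^k are anti-transpose: with n = C(k-1, ℓ-1) = C(k-1, k-ℓ), for all 1 ≤ p, q ≤ n one has t_ℓ^k(p, q) = t_{k+1-ℓ}^k(n+1-q, n+1-p). -/
/-- `Tmat k i p q` holds iff the `(p,q)` entry of the tensor `T_i^k` equals `1`. -/
def Tmat (k i p q : ℕ) : Prop :=
  ∃ A B, IsRowComp k i A ∧ IsComposition k i B ∧ rowIdx k i A = p ∧ colIdx k i B = q ∧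
    ∀ m, 1 ≤ m → m ≤ i → (B.take m).sum < (A.take m).sum

namespace TA

/-- partial-sum marks of a composition: `[s₁, …, s_{i-1}]` (drops the final total). -/
def marksAux : ℕ → List ℕ → List ℕ
  | _, [] => []
  | _, [_] => []
  | acc, a :: b :: rest => (acc + a) :: marksAux (acc + a) (b :: rest)

/-- rebuild a composition from marks and a total -/
def comps : ℕ → List ℕ → ℕ → List ℕ
  | prev, [], n => [n - prev]
  | prev, s :: rest, n => (s - prev) :: comps s rest n

def marks (l : List ℕ) : List ℕ := marksAux 0 l

lemma marksAux_length : ∀ (acc : ℕ) (l : List ℕ), (marksAux acc l).length = l.length - 1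
  | _, [] => rfl
  | _, [_] => rfl
  | acc, a :: b :: rest => by
    simp only [marksAux, List.length_cons, marksAux_length (acc + a) (b :: rest)]
    simp

lemma marksAux_getD : ∀ (acc : ℕ) (l : List ℕ) (j : ℕ), j + 1 < l.length →
    (marksAux acc l).getD j 0 = acc + (l.take (j + 1)).sum
  | acc, [], j, h => by simp at h
  | acc, [a], j, h => by simp at h
  | acc, a :: b :: rest, 0, h => by simp [marksAux]
  | acc, a :: b :: rest, j + 1, h => by
    have := marksAux_getD (acc + a) (b :: rest) j (by simpa using Nat.lt_of_succ_lt_succ h)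
    simp only [marksAux, List.getD_cons_succ, this, List.take_succ_cons, List.sum_cons]
    omega

lemma marksAux_mem : ∀ (acc : ℕ) (l : List ℕ) (x : ℕ), (∀ p ∈ l, 0 < p) →
    x ∈ marksAux acc l → acc < x ∧ x < acc + l.sum
  | acc, [], x, _, hx => by simp [marksAux] at hx
  | acc, [a], x, _, hx => by simp [marksAux] at hx
  | acc, a :: b :: rest, x, hpos, hx => by
    rcases List.mem_cons.mp hx with rfl | hx
    · have ha : 0 < a := hpos a (by simp)
      have hs : 0 < (b :: rest).sum := by
        have := hpos b (by simp); simp; omega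
      constructor
      · omega
      · simp only [List.sum_cons] at hs ⊢; omega
    · have := marksAux_mem (acc + a) (b :: rest) x (fun p hp => hpos p (by simp [hp])) hx
      simp only [List.sum_cons] at this ⊢
      omega

lemma marksAux_sorted : ∀ (acc : ℕ) (l : List ℕ), (∀ p ∈ l, 0 < p) →
    (marksAux acc l).Pairwise (· < ·)
  | _, [], _ => by simp [marksAux]
  | _, [_], _ => by simp [marksAux]
  | acc, a :: b :: rest, hpos => by
    rw [marksAux, List.pairwise_cons]
    refine ⟨fun x hx => ?_, marksAux_sorted (acc + a) (b :: rest)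
      (fun p hp => hpos p (by simp [hp]))⟩
    exact (marksAux_mem (acc + a) (b :: rest) x (fun p hp => hpos p (by simp [hp])) hx).1

lemma marksAux_head_le : ∀ (acc : ℕ) (l : List ℕ) (x : ℕ), (∀ p ∈ l, 0 < p) →
    x ∈ marksAux acc l → acc + l.headI ≤ x
  | acc, [], x, _, hx => by simp [marksAux] at hx
  | acc, [a], x, _, hx => by simp [marksAux] at hx
  | acc, a :: b :: rest, x, hpos, hx => by
    rcases List.mem_cons.mp hx with rfl | hx
    · simp
    · have := (marksAux_mem (acc + a) (b :: rest) x (fun p hp => hpos p (by simp [hp])) hx).1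
      simp only [List.headI]
      omega

lemma comps_marksAux : ∀ (l : List ℕ) (acc : ℕ), (∀ p ∈ l, 0 < p) → l ≠ [] →
    comps acc (marksAux acc l) (acc + l.sum) = l
  | [], _, _, h => absurd rfl h
  | [a], acc, _, _ => by simp [marksAux, comps]
  | a :: b :: rest, acc, hpos, _ => by
    have IH := comps_marksAux (b :: rest) (acc + a) (fun p hp => hpos p (by simp [hp]))
      (by simp)
    simp only [marksAux, comps, List.sum_cons] at IH ⊢
    rw [show acc + (a + (b + rest.sum)) = acc + a + (b + rest.sum) by omega] at *
    rw [IH]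
    simp

lemma chain'_lt_last {t : List ℕ} {x n : ℕ} (h : List.Chain' (· < ·) (x :: (t ++ [n]))) :
    x < n := by
  unfold List.Chain' at h
  rw [List.isChain_iff_pairwise] at h
  exact (List.pairwise_cons.mp h).1 n (by simp)

lemma comps_spec : ∀ (s : List ℕ) (prev n : ℕ), List.Chain' (· < ·) (prev :: (s ++ [n])) →
    (comps prev s n).length = s.length + 1 ∧ (comps prev s n).sum = n - prev ∧
    (∀ x ∈ comps prev s n, 0 < x) ∧ marksAux prev (comps prev s n) = s ∧
    (comps prev s n).headI = (s ++ [n]).headI - prev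
  | [], prev, n, h => by
    have : prev < n := chain'_lt_last h
    simp [comps, marksAux]
    omega
  | a :: rest, prev, n, h => by
    have h1 : prev < a := by
      unfold List.Chain' at h
      rw [List.cons_append, List.isChain_cons_cons] at h; exact h.1
    have h2 : List.Chain' (· < ·) (a :: (rest ++ [n])) := by
      unfold List.Chain' at h
      rw [List.cons_append, List.isChain_cons_cons] at h; exact h.2
    have han : a < n := chain'_lt_last h2
    obtain ⟨IH1, IH2, IH3, IH4, IH5⟩ := comps_spec rest a n h2
    have hne : comps a rest n ≠ [] := by
      intro hc; rw [hc] at IH1; simp at IH1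
    obtain ⟨y, ys, hys⟩ := List.exists_cons_of_ne_nil hne
    refine ⟨by simp [comps, IH1], ?_, ?_, ?_, by simp [comps]⟩
    · simp only [comps, List.sum_cons, IH2]; omega
    · intro x hx
      rcases List.mem_cons.mp hx with rfl | hx
      · omega
      · exact IH3 x hx
    · show marksAux prev ((a - prev) :: comps a rest n) = a :: rest
      rw [hys]
      show (prev + (a - prev)) :: marksAux (prev + (a - prev)) (y :: ys) = a :: rest
      rw [show prev + (a - prev) = a by omega, ← hys, IH4]

end TA

namespace TA2
open List

lemma lex_trichotomy (l₁ l₂ : List ℕ) : Lex (·<·) l₁ l₂ ∨ l₁ = l₂ ∨ Lex (·<·) l₂ l₁ :=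
  lt_trichotomy l₁ l₂

lemma lex_asymm {l₁ l₂ : List ℕ} (h : Lex (·<·) l₁ l₂) : ¬ Lex (·<·) l₂ l₁ :=
  lt_asymm (α := List ℕ) h

lemma lex_irrefl (l : List ℕ) : ¬ Lex (·<·) l l := lt_irrefl l

lemma lex_map_mono {f : ℕ → ℕ} (hf : StrictMono f) {l₁ l₂ : List ℕ}
    (h : Lex (·<·) l₁ l₂) : Lex (·<·) (l₁.map f) (l₂.map f) := by
  induction h with
  | nil => exact Lex.nil
  | cons _ ih => exact Lex.cons ih
  | rel hab => exact Lex.rel (hf hab)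

lemma lex_map_iff {f : ℕ → ℕ} (hf : StrictMono f) {l₁ l₂ : List ℕ} :
    Lex (·<·) (l₁.map f) (l₂.map f) ↔ Lex (·<·) l₁ l₂ := by
  refine ⟨fun h => ?_, lex_map_mono hf⟩
  rcases lex_trichotomy l₁ l₂ with h' | h' | h'
  · exact h'
  · subst h'; exact absurd h (lex_irrefl _)
  · exact absurd h (lex_asymm (lex_map_mono hf h'))

end TA2

namespace TA3
open List

-- forward: lex of lists implies lex of marks, given equal lengths and sums
lemma lex_marksAux_mono (l₁ : List ℕ) : ∀ (l₂ : List ℕ) (acc : ℕ),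
    l₁.length = l₂.length → l₁.sum = l₂.sum →
    Lex (·<·) l₁ l₂ → Lex (·<·) (TA.marksAux acc l₁) (TA.marksAux acc l₂) := by
  induction l₁ with
  | nil =>
    intro l₂ acc hlen _ h
    cases h; simp at hlen
  | cons a t₁ ih =>
    intro l₂ acc hlen hsum h
    cases l₂ with
    | nil => cases h
    | cons b t₂ =>
      simp only [List.length_cons, Nat.succ.injEq] at hlen
      simp only [List.sum_cons] at hsum
      cases h with
      | rel hab =>
        cases t₁ with
        | nil =>
          cases t₂ with
          | nil => simp at hsum; omega
          | cons d ds => simp at hlen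
        | cons c cs =>
          cases t₂ with
          | nil => simp at hlen
          | cons d ds => exact Lex.rel (by omega)
      | cons htail =>
        cases t₁ with
        | nil =>
          cases t₂ with
          | nil => cases htail
          | cons d ds => simp at hlen
        | cons c cs =>
          cases t₂ with
          | nil => simp at hlen
          | cons d ds =>
            exact Lex.cons (ih (d :: ds) (acc + a) (by simpa using hlen) (by omega) htail)

lemma marksAux_inj {l₁ l₂ : List ℕ} (acc : ℕ)
    (h₁ : ∀ p ∈ l₁, 0 < p) (h₂ : ∀ p ∈ l₂, 0 < p)
    (hne₁ : l₁ ≠ []) (hne₂ : l₂ ≠ []) (hsum : l₁.sum = l₂.sum)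
    (h : TA.marksAux acc l₁ = TA.marksAux acc l₂) : l₁ = l₂ := by
  have e₁ := TA.comps_marksAux l₁ acc h₁ hne₁
  have e₂ := TA.comps_marksAux l₂ acc h₂ hne₂
  rw [← e₁, ← e₂, h, hsum]

lemma lex_marksAux_iff {l₁ l₂ : List ℕ} (acc : ℕ)
    (h₁ : ∀ p ∈ l₁, 0 < p) (h₂ : ∀ p ∈ l₂, 0 < p) (hne₁ : l₁ ≠ [])
    (hlen : l₁.length = l₂.length) (hsum : l₁.sum = l₂.sum) :
    Lex (·<·) (TA.marksAux acc l₁) (TA.marksAux acc l₂) ↔ Lex (·<·) l₁ l₂ := by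
  refine ⟨fun h => ?_, lex_marksAux_mono l₁ l₂ acc hlen hsum⟩
  rcases TA2.lex_trichotomy l₁ l₂ with h' | h' | h'
  · exact h'
  · subst h'; exact absurd h (TA2.lex_irrefl _)
  · exact absurd h (TA2.lex_asymm (lex_marksAux_mono l₂ l₁ acc hlen.symm hsum.symm h'))

-- lex characterization for sorted lists of equal length
lemma sorted_lex_iff : ∀ (l₁ l₂ : List ℕ), l₁.Pairwise (·<·) → l₂.Pairwise (·<·) →
    l₁.length = l₂.length →
    (Lex (·<·) l₁ l₂ ↔ ∃ a, a ∈ l₁ ∧ a ∉ l₂ ∧ ∀ b, b < a → (b ∈ l₁ ↔ b ∈ l₂))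
  | [], l₂, _, _, hlen => by
    have : l₂ = [] := by cases l₂ <;> simp_all
    subst this
    constructor
    · intro h; cases h
    · rintro ⟨a, ha, -⟩; simp at ha
  | a :: t₁, [], _, _, hlen => by simp at hlen
  | a₁ :: t₁, a₂ :: t₂, h₁, h₂, hlen => by
    rw [List.pairwise_cons] at h₁ h₂
    simp only [List.length_cons, Nat.succ.injEq] at hlen
    constructor
    · intro h
      cases h with
      | rel hab =>
        refine ⟨a₁, by simp, ?_, fun b hb => ?_⟩
        · intro hmem
          rcases List.mem_cons.mp hmem with h | h
          · omega
          · exact absurd (h₂.1 _ h) (by omega)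
        · constructor
          · intro hmem
            rcases List.mem_cons.mp hmem with h | h
            · omega
            · exact absurd (h₁.1 _ h) (by omega)
          · intro hmem
            rcases List.mem_cons.mp hmem with h | h
            · omega
            · exact absurd (h₂.1 _ h) (by omega)
      | cons htail =>
        obtain ⟨a, ha₁, ha₂, hbelow⟩ :=
          (sorted_lex_iff t₁ t₂ h₁.2 h₂.2 hlen).mp htail
        have haa : a₁ < a := h₁.1 a ha₁
        refine ⟨a, by simp [ha₁], ?_, fun b hb => ?_⟩
        · intro hmem
          rcases List.mem_cons.mp hmem with h | h
          · omega
          · exact ha₂ h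
        · by_cases hba : b = a₁
          · subst hba; simp
          · simp only [List.mem_cons]
            constructor
            · rintro (h | h)
              · exact absurd h hba
              · exact Or.inr ((hbelow b hb).mp h)
            · rintro (h | h)
              · exact absurd h hba
              · exact Or.inr ((hbelow b hb).mpr h)
    · rintro ⟨a, ha₁, ha₂, hbelow⟩
      rcases lt_trichotomy a₁ a₂ with hcmp | hcmp | hcmp
      · exact Lex.rel hcmp
      · subst hcmp
        have hane : a ≠ a₁ := by rintro rfl; exact ha₂ (by simp)
        have hat₁ : a ∈ t₁ := by rcases List.mem_cons.mp ha₁ with h | h; exact absurd h hane; exact h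
        have ha₁a : a₁ < a := h₁.1 a hat₁
        refine Lex.cons ((sorted_lex_iff t₁ t₂ h₁.2 h₂.2 hlen).mpr
          ⟨a, hat₁, fun h => ha₂ (by simp [h]), fun b hb => ?_⟩)
        constructor
        · intro h
          rcases List.mem_cons.mp ((hbelow b hb).mp (by simp [h])) with h' | h'
          · exact absurd (h'.symm ▸ h₁.1 b h) (lt_irrefl _)
          · exact h'
        · intro h
          rcases List.mem_cons.mp ((hbelow b hb).mpr (by simp [h])) with h' | h'
          · exact absurd (h'.symm ▸ h₂.1 b h) (lt_irrefl _)
          · exact h'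
      · -- a₂ < a₁ : contradiction
        exfalso
        have ha₂a : a₂ < a := by
          have := List.mem_cons.mp ha₁
          rcases this with rfl | h
          · exact hcmp
          · exact lt_trans hcmp (h₁.1 a h)
        have : a₂ ∈ a₁ :: t₁ := (hbelow a₂ ha₂a).mpr (by simp)
        rcases List.mem_cons.mp this with h | h
        · omega
        · exact absurd (h₁.1 _ h) (by omega)
end TA3

namespace TA4
open List Finset

lemma sorted_getD_le_iff (l : List ℕ) (hl : l.Pairwise (· < ·)) :
    ∀ (j : ℕ), j < l.length → ∀ (x : ℕ),
      (l.getD j 0 ≤ x ↔ j < l.countP (fun y => y ≤ x)) := by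
  induction l with
  | nil => intro j hj; simp at hj
  | cons a t ih =>
    rw [List.pairwise_cons] at hl
    intro j hj x
    rw [List.countP_cons]
    cases j with
    | zero =>
      simp only [List.getD_cons_zero]
      constructor
      · intro h
        have : decide (a ≤ x) = true := by simpa using h
        simp [this]
      · intro h
        by_contra hax
        have hax' : x < a := by omega
        have : t.countP (fun y => y ≤ x) = 0 := by
          rw [List.countP_eq_zero]
          intro y hy
          have := hl.1 y hy
          simpa using by omega
        simp [this, show ¬ (a ≤ x) by omega] at h
    | succ j =>
      simp only [List.getD_cons_succ]
      have hjt : j < t.length := by simpa using hj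
      rw [ih hl.2 j hjt x]
      constructor
      · intro h
        have hgd : t.getD j 0 ≤ x := (ih hl.2 j hjt x).mpr h
        have hmem : t.getD j 0 ∈ t := by
          rw [List.getD_eq_getElem _ _ hjt]
          exact List.getElem_mem _
        have hax : a ≤ x := le_trans (le_of_lt (hl.1 _ hmem)) hgd
        simp [hax]
        omega
      · intro h
        have : (if (a ≤ x) then 1 else 0) ≤ 1 := by split <;> omega
        simp only [decide_eq_true_eq] at h
        omega

def cnt (S : Finset ℕ) (x : ℕ) : ℕ := (S.filter (· ≤ x)).card

lemma cnt_sort (S : Finset ℕ) (x : ℕ) :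
    (S.sort (· ≤ ·)).countP (fun y => y ≤ x) = cnt S x := by
  have h1 : (↑(S.sort (· ≤ ·)) : Multiset ℕ) = S.val := Finset.sort_eq _ _
  have h2 : cnt S x = Multiset.countP (fun y => y ≤ x) S.val := by
    rw [cnt, Finset.card, Finset.filter_val, Multiset.countP_eq_card_filter]
  rw [h2, ← h1, Multiset.coe_countP]

end TA4

namespace TA5
open List Finset

/-- `Dom r S T`: the `j`-th smallest element of `S` is `≤` that of `T`, for `j < r`. -/
def Dom (r : ℕ) (S T : Finset ℕ) : Prop :=
  ∀ j < r, (S.sort (· ≤ ·)).getD j 0 ≤ (T.sort (· ≤ ·)).getD j 0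

lemma cnt_le_card (S : Finset ℕ) (x : ℕ) : TA4.cnt S x ≤ S.card :=
  Finset.card_filter_le _ _

lemma dom_iff_cnt {S T : Finset ℕ} {r : ℕ} (hS : S.card = r) (hT : T.card = r) :
    Dom r S T ↔ ∀ x, TA4.cnt T x ≤ TA4.cnt S x := by
  have hlS : (S.sort (· ≤ ·)).length = r := by rw [Finset.length_sort]; exact hS
  have hlT : (T.sort (· ≤ ·)).length = r := by rw [Finset.length_sort]; exact hT
  constructor
  · intro h x
    by_contra hc
    push_neg at hc
    set j := TA4.cnt S x with hj
    have hjr : j < r := lt_of_lt_of_le hc (hT ▸ cnt_le_card T x)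
    have h1 : (T.sort (· ≤ ·)).getD j 0 ≤ x := by
      rw [TA4.sorted_getD_le_iff _ (T.sortedLT_sort.pairwise) j (by omega) x, TA4.cnt_sort]
      exact hc
    have h2 : (S.sort (· ≤ ·)).getD j 0 ≤ x := le_trans (h j hjr) h1
    rw [TA4.sorted_getD_le_iff _ (S.sortedLT_sort.pairwise) j (by omega) x, TA4.cnt_sort] at h2
    omega
  · intro h j hj
    set x := (T.sort (· ≤ ·)).getD j 0 with hx
    have h1 : j < TA4.cnt T x := by
      rw [← TA4.cnt_sort, ← TA4.sorted_getD_le_iff _ (T.sortedLT_sort.pairwise) j (by omega) x]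
    have h2 : j < TA4.cnt S x := lt_of_lt_of_le h1 (h x)
    rw [← TA4.cnt_sort, ← TA4.sorted_getD_le_iff _ (S.sortedLT_sort.pairwise) j (by omega) x] at h2
    exact h2

lemma cnt_compl {N : ℕ} {S : Finset ℕ} (hS : S ⊆ Finset.Icc 1 N) (x : ℕ) :
    TA4.cnt S x + TA4.cnt (Finset.Icc 1 N \ S) x = TA4.cnt (Finset.Icc 1 N) x := by
  unfold TA4.cnt
  rw [← Finset.card_union_of_disjoint, ← Finset.filter_union,
    Finset.union_sdiff_of_subset hS]
  exact Finset.disjoint_filter_filter Finset.disjoint_sdiff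

lemma card_compl {N : ℕ} {S : Finset ℕ} (hS : S ⊆ Finset.Icc 1 N) {r : ℕ}
    (hcard : S.card = r) : (Finset.Icc 1 N \ S).card = N - r := by
  rw [Finset.card_sdiff_of_subset hS, Nat.card_Icc, hcard]
  omega

lemma dom_compl {N r : ℕ} {S T : Finset ℕ} (hS : S ⊆ Finset.Icc 1 N)
    (hT : T ⊆ Finset.Icc 1 N) (hcS : S.card = r) (hcT : T.card = r) :
    Dom r S T ↔ Dom (N - r) (Finset.Icc 1 N \ T) (Finset.Icc 1 N \ S) := by
  rw [dom_iff_cnt hcS hcT, dom_iff_cnt (card_compl hT hcT) (card_compl hS hcS)]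
  constructor
  · intro h x
    have := cnt_compl hS x
    have := cnt_compl hT x
    have := h x
    omega
  · intro h x
    have := cnt_compl hS x
    have := cnt_compl hT x
    have := h x
    omega

lemma lex_compl_mp {N : ℕ} {S T : Finset ℕ} (hS : S ⊆ Finset.Icc 1 N)
    (hT : T ⊆ Finset.Icc 1 N) (hST : S.card = T.card)
    (h : Lex (·<·) (S.sort (· ≤ ·)) (T.sort (· ≤ ·))) :
    Lex (·<·) ((Finset.Icc 1 N \ T).sort (· ≤ ·)) ((Finset.Icc 1 N \ S).sort (· ≤ ·)) := by
  rw [TA3.sorted_lex_iff _ _ S.sortedLT_sort.pairwise T.sortedLT_sort.pairwise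
    (by rw [Finset.length_sort, Finset.length_sort, hST])] at h
  rw [TA3.sorted_lex_iff _ _ (Finset.Icc 1 N \ T).sortedLT_sort.pairwise
    (Finset.Icc 1 N \ S).sortedLT_sort.pairwise
    (by rw [Finset.length_sort, Finset.length_sort,
      Finset.card_sdiff_of_subset hT, Finset.card_sdiff_of_subset hS, hST])]
  obtain ⟨a, ha₁, ha₂, hbelow⟩ := h
  simp only [Finset.mem_sort] at ha₁ ha₂ hbelow ⊢
  refine ⟨a, ?_, ?_, fun b hb => ?_⟩
  · rw [Finset.mem_sdiff]
    exact ⟨hS ha₁, ha₂⟩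
  · rw [Finset.mem_sdiff]
    push_neg
    intro _; exact ha₁
  · rw [Finset.mem_sdiff, Finset.mem_sdiff]
    have := hbelow b hb
    tauto

lemma lex_compl_iff {N : ℕ} {S T : Finset ℕ} (hS : S ⊆ Finset.Icc 1 N)
    (hT : T ⊆ Finset.Icc 1 N) (hST : S.card = T.card) :
    Lex (·<·) (S.sort (· ≤ ·)) (T.sort (· ≤ ·)) ↔
      Lex (·<·) ((Finset.Icc 1 N \ T).sort (· ≤ ·)) ((Finset.Icc 1 N \ S).sort (· ≤ ·)) := by
  refine ⟨lex_compl_mp hS hT hST, fun h => ?_⟩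
  have := lex_compl_mp (Finset.sdiff_subset) (Finset.sdiff_subset)
    (by rw [Finset.card_sdiff_of_subset hT, Finset.card_sdiff_of_subset hS, hST]) h
  rwa [Finset.sdiff_sdiff_eq_self hS, Finset.sdiff_sdiff_eq_self hT] at this

end TA5

namespace TA6
open List Finset

def encC (C : List ℕ) : Finset ℕ := (TA.marks C).toFinset
def encR (C : List ℕ) : Finset ℕ := ((TA.marks C).map (· - 1)).toFinset
def decC (N : ℕ) (S : Finset ℕ) : List ℕ := TA.comps 0 (S.sort (· ≤ ·)) (N + 1)
def decR (N : ℕ) (S : Finset ℕ) : List ℕ :=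
  TA.comps 0 ((S.sort (· ≤ ·)).map (· + 1)) (N + 2)

lemma chain'_mk {l : List ℕ} {a b : ℕ} (hs : l.Pairwise (·<·))
    (hb : ∀ x ∈ l, a < x ∧ x < b) (hab : a < b) :
    List.Chain' (·<·) (a :: (l ++ [b])) := by
  unfold List.Chain'
  rw [List.isChain_iff_pairwise, List.pairwise_cons]
  constructor
  · intro y hy
    rcases List.mem_append.mp hy with h | h
    · exact (hb y h).1
    · simp at h; omega
  · rw [List.pairwise_append]
    refine ⟨hs, by simp, ?_⟩
    intro x hx y hy
    simp only [List.mem_singleton] at hy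
    subst hy
    exact (hb x hx).2

lemma map_sub_add {l : List ℕ} (h : ∀ x ∈ l, 1 ≤ x) : (l.map (· - 1)).map (· + 1) = l := by
  rw [List.map_map]
  conv_rhs => rw [← List.map_id l]
  apply List.map_congr_left
  intro x hx
  have := h x hx
  simp
  omega

lemma map_add_sub (l : List ℕ) : (l.map (· + 1)).map (· - 1) = l := by
  rw [List.map_map]
  conv_rhs => rw [← List.map_id l]
  apply List.map_congr_left
  intro x _
  simp

lemma sorted_nodup {l : List ℕ} (h : l.Pairwise (·<·)) : l.Nodup :=
  h.imp (fun hab => ne_of_lt hab)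

lemma sorted_le {l : List ℕ} (h : l.Pairwise (·<·)) : l.Pairwise (· ≤ ·) :=
  h.imp (fun hab => le_of_lt hab)

/-- facts about a column composition -/
lemma col_facts {N i : ℕ} {C : List ℕ} (h : IsComposition (N+1) i C) (hi : 1 ≤ i) :
    (∀ x ∈ TA.marks C, 1 ≤ x ∧ x ≤ N) ∧
    (encC C).sort (· ≤ ·) = TA.marks C ∧ encC C ⊆ Finset.Icc 1 N ∧
    (encC C).card = i - 1 ∧ decC N (encC C) = C := by
  obtain ⟨hlen, hsum, hpos⟩ := h
  have hsort := TA.marksAux_sorted 0 C hpos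
  have hmem : ∀ x ∈ TA.marks C, 1 ≤ x ∧ x ≤ N := by
    intro x hx
    have := TA.marksAux_mem 0 C x hpos hx
    omega
  have hsorteq : (encC C).sort (· ≤ ·) = TA.marks C :=
    (List.toFinset_sort _ (sorted_nodup hsort)).mpr (sorted_le hsort)
  refine ⟨hmem, hsorteq, ?_, ?_, ?_⟩
  · intro x hx
    rw [encC, List.mem_toFinset] at hx
    rw [Finset.mem_Icc]
    exact hmem x hx
  · rw [encC, TA.marks, List.toFinset_card_of_nodup (sorted_nodup hsort),
      TA.marksAux_length, hlen]
  · rw [decC, hsorteq, TA.marks]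
    have := TA.comps_marksAux C 0 hpos (by intro hc; rw [hc] at hlen; simp at hlen; omega)
    rwa [Nat.zero_add, hsum] at this

/-- facts about decoding a subset into a column composition -/
lemma decC_facts {N r : ℕ} {S : Finset ℕ} (hS : S ⊆ Finset.Icc 1 N) (hcard : S.card = r) :
    IsComposition (N+1) (r+1) (decC N S) ∧ TA.marks (decC N S) = S.sort (· ≤ ·) ∧
    encC (decC N S) = S := by
  have hbound : ∀ x ∈ S.sort (· ≤ ·), 0 < x ∧ x < N + 1 := by
    intro x hx
    rw [Finset.mem_sort] at hx
    have := Finset.mem_Icc.mp (hS hx)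
    omega
  have hch := chain'_mk (S.sortedLT_sort.pairwise) hbound (by omega)
  obtain ⟨h1, h2, h3, h4, _⟩ := TA.comps_spec (S.sort (· ≤ ·)) 0 (N+1) hch
  have hmk : TA.marks (decC N S) = S.sort (· ≤ ·) := h4
  refine ⟨⟨by rw [decC, h1, Finset.length_sort, hcard], by rw [decC, h2]; omega, by rw [decC]; exact h3⟩,
    hmk, ?_⟩
  rw [encC, hmk, Finset.sort_toFinset]

/-- facts about a row composition -/
lemma row_facts {N i : ℕ} {C : List ℕ} (h : IsRowComp (N+1) i C) (hi : 1 ≤ i) :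
    (∀ x ∈ TA.marks C, 2 ≤ x ∧ x ≤ N + 1) ∧
    (encR C).sort (· ≤ ·) = (TA.marks C).map (· - 1) ∧ encR C ⊆ Finset.Icc 1 N ∧
    (encR C).card = i - 1 ∧ decR N (encR C) = C ∧
    ((encR C).sort (· ≤ ·)).map (· + 1) = TA.marks C := by
  obtain ⟨⟨hlen, hsum, hpos⟩, hhead⟩ := h
  have hsort := TA.marksAux_sorted 0 C hpos
  have hmem : ∀ x ∈ TA.marks C, 2 ≤ x ∧ x ≤ N + 1 := by
    intro x hx
    have h1 := TA.marksAux_mem 0 C x hpos hx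
    have h2 := TA.marksAux_head_le 0 C x hpos hx
    omega
  have hsort' : ((TA.marks C).map (· - 1)).Pairwise (·<·) := by
    rw [List.pairwise_map]
    apply hsort.imp_of_mem
    intro a b ha hb hab
    have := (hmem a ha).1
    show a - 1 < b - 1
    omega
  have hsorteq : (encR C).sort (· ≤ ·) = (TA.marks C).map (· - 1) :=
    (List.toFinset_sort _ (sorted_nodup hsort')).mpr (sorted_le hsort')
  have hroundtrip : ((encR C).sort (· ≤ ·)).map (· + 1) = TA.marks C := by
    rw [hsorteq, map_sub_add (fun x hx => by have := (hmem x hx).1; omega)]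
  refine ⟨hmem, hsorteq, ?_, ?_, ?_, hroundtrip⟩
  · intro x hx
    rw [encR, List.mem_toFinset, List.mem_map] at hx
    obtain ⟨y, hy, rfl⟩ := hx
    have := hmem y hy
    rw [Finset.mem_Icc]
    omega
  · rw [encR]
    rw [List.toFinset_card_of_nodup (sorted_nodup hsort'), List.length_map, TA.marks,
      TA.marksAux_length, hlen]
  · rw [decR, hroundtrip, TA.marks]
    have := TA.comps_marksAux C 0 hpos (by intro hc; rw [hc] at hlen; simp at hlen; omega)
    rwa [Nat.zero_add, hsum] at this

/-- facts about decoding a subset into a row composition -/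
lemma decR_facts {N r : ℕ} {S : Finset ℕ} (hS : S ⊆ Finset.Icc 1 N) (hcard : S.card = r) :
    IsRowComp (N+1) (r+1) (decR N S) ∧
    TA.marks (decR N S) = (S.sort (· ≤ ·)).map (· + 1) ∧ encR (decR N S) = S := by
  have hmem : ∀ x ∈ S.sort (· ≤ ·), 1 ≤ x ∧ x ≤ N := by
    intro x hx
    rw [Finset.mem_sort] at hx
    exact Finset.mem_Icc.mp (hS hx)
  have hsort' : ((S.sort (· ≤ ·)).map (· + 1)).Pairwise (·<·) := by
    rw [List.pairwise_map]
    apply (S.sortedLT_sort.pairwise).imp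
    intro a b hab
    show a + 1 < b + 1
    omega
  have hbound : ∀ x ∈ (S.sort (· ≤ ·)).map (· + 1), 0 < x ∧ x < N + 2 := by
    intro x hx
    rw [List.mem_map] at hx
    obtain ⟨y, hy, rfl⟩ := hx
    have := hmem y hy
    omega
  have hch := chain'_mk hsort' hbound (by omega)
  obtain ⟨h1, h2, h3, h4, h5⟩ := TA.comps_spec ((S.sort (· ≤ ·)).map (· + 1)) 0 (N+2) hch
  have hmk : TA.marks (decR N S) = (S.sort (· ≤ ·)).map (· + 1) := h4
  have hhead : 2 ≤ (decR N S).headI := by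
    rw [decR, h5]
    rcases hsort : S.sort (· ≤ ·) with _ | ⟨a, t⟩
    · simp
    · have : 1 ≤ a := (hmem a (by rw [hsort]; simp)).1
      simp
      omega
  refine ⟨⟨⟨?_, ?_, ?_⟩, hhead⟩, hmk, ?_⟩
  · rw [decR, h1, List.length_map, Finset.length_sort, hcard]
  · rw [decR, h2]; omega
  · rw [decR]; exact h3
  · rw [encR, hmk, map_add_sub, Finset.sort_toFinset]

end TA6

namespace TA7
open List Finset TA6

lemma succ_sm : StrictMono (fun x : ℕ => x + 1) := fun _ _ h => Nat.succ_lt_succ h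

lemma lex_col_iff {N i : ℕ} {C C' : List ℕ} (hC : IsComposition (N+1) i C)
    (hC' : IsComposition (N+1) i C') (hi : 1 ≤ i) :
    Lex (·<·) ((encC C).sort (· ≤ ·)) ((encC C').sort (· ≤ ·)) ↔ Lex (·<·) C C' := by
  rw [(col_facts hC hi).2.1, (col_facts hC' hi).2.1]
  exact TA3.lex_marksAux_iff 0 hC.2.2 hC'.2.2
    (by intro hc; have := hC.1; rw [hc] at this; simp at this; omega)
    (by rw [hC.1, hC'.1]) (by rw [hC.2.1, hC'.2.1])

lemma lex_row_iff {N i : ℕ} {C C' : List ℕ} (hC : IsRowComp (N+1) i C)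
    (hC' : IsRowComp (N+1) i C') (hi : 1 ≤ i) :
    Lex (·<·) ((encR C).sort (· ≤ ·)) ((encR C').sort (· ≤ ·)) ↔ Lex (·<·) C C' := by
  rw [← TA2.lex_map_iff succ_sm, (row_facts hC hi).2.2.2.2.2, (row_facts hC' hi).2.2.2.2.2]
  exact TA3.lex_marksAux_iff 0 hC.1.2.2 hC'.1.2.2
    (by intro hc; have := hC.1.1; rw [hc] at this; simp at this; omega)
    (by rw [hC.1.1, hC'.1.1]) (by rw [hC.1.2.1, hC'.1.2.1])

def ψ (N : ℕ) (B : List ℕ) : List ℕ := decR N (Finset.Icc 1 N \ encC B)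
def χ (N : ℕ) (C : List ℕ) : List ℕ := decC N (Finset.Icc 1 N \ encR C)

lemma psi_props {N r : ℕ} (hr : r ≤ N) {B : List ℕ} (hB : IsComposition (N+1) (r+1) B) :
    IsRowComp (N+1) (N-r+1) (ψ N B) ∧ encR (ψ N B) = Finset.Icc 1 N \ encC B ∧
    χ N (ψ N B) = B := by
  obtain ⟨hmem, hsorteq, hsub, hcard, hdec⟩ := col_facts hB (by omega)
  have hcard' : (encC B).card = r := by omega
  have hsub' : Finset.Icc 1 N \ encC B ⊆ Finset.Icc 1 N := Finset.sdiff_subset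
  have hc' := TA5.card_compl hsub hcard'
  obtain ⟨hrow, hmk, henc⟩ := decR_facts hsub' hc'
  exact ⟨hrow, henc, by rw [χ, ψ, henc, Finset.sdiff_sdiff_eq_self hsub, hdec]⟩

lemma chi_props {N r' : ℕ} (hr' : r' ≤ N) {C : List ℕ} (hC : IsRowComp (N+1) (r'+1) C) :
    IsComposition (N+1) (N-r'+1) (χ N C) ∧ encC (χ N C) = Finset.Icc 1 N \ encR C ∧
    ψ N (χ N C) = C := by
  obtain ⟨hmem, hsorteq, hsub, hcard, hdec, hrt⟩ := row_facts hC (by omega)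
  have hcard' : (encR C).card = r' := by omega
  have hsub' : Finset.Icc 1 N \ encR C ⊆ Finset.Icc 1 N := Finset.sdiff_subset
  have hc' := TA5.card_compl hsub hcard'
  obtain ⟨hcol, hmk, henc⟩ := decC_facts hsub' hc'
  exact ⟨hcol, henc, by rw [ψ, χ, henc, Finset.sdiff_sdiff_eq_self hsub, hdec]⟩

lemma psi_rev {N r : ℕ} (hr : r ≤ N) {D D' : List ℕ}
    (hD : IsComposition (N+1) (r+1) D) (hD' : IsComposition (N+1) (r+1) D') :
    Lex (·<·) (ψ N D) (ψ N D') ↔ Lex (·<·) D' D := by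
  obtain ⟨hrowD, hencD, _⟩ := psi_props hr hD
  obtain ⟨hrowD', hencD', _⟩ := psi_props hr hD'
  have hcards : (encC D').card = (encC D).card := by
    have := (col_facts hD (by omega)).2.2.2.1
    have := (col_facts hD' (by omega)).2.2.2.1
    omega
  rw [← lex_row_iff hrowD hrowD' (by omega), hencD, hencD',
    ← TA5.lex_compl_iff (col_facts hD' (by omega)).2.2.1 (col_facts hD (by omega)).2.2.1 hcards,
    lex_col_iff hD' hD (by omega)]

lemma chi_rev {N r' : ℕ} (hr' : r' ≤ N) {X Y : List ℕ}
    (hX : IsRowComp (N+1) (r'+1) X) (hY : IsRowComp (N+1) (r'+1) Y) :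
    Lex (·<·) (χ N X) (χ N Y) ↔ Lex (·<·) Y X := by
  obtain ⟨hcolX, hencX, _⟩ := chi_props hr' hX
  obtain ⟨hcolY, hencY, _⟩ := chi_props hr' hY
  have hcards : (encR Y).card = (encR X).card := by
    have := (row_facts hX (by omega)).2.2.2.1
    have := (row_facts hY (by omega)).2.2.2.1
    omega
  rw [← lex_col_iff hcolX hcolY (by omega), hencX, hencY,
    ← TA5.lex_compl_iff (row_facts hY (by omega)).2.2.1 (row_facts hX (by omega)).2.2.1 hcards,
    lex_row_iff hY hX (by omega)]

def colEquiv (N r : ℕ) :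
    {C : List ℕ // IsComposition (N+1) (r+1) C} ≃
      {S : Finset ℕ // S ⊆ Finset.Icc 1 N ∧ S.card = r} where
  toFun := fun ⟨C, hC⟩ => ⟨encC C, (col_facts hC (by omega)).2.2.1,
    by have := (col_facts hC (by omega)).2.2.2.1; omega⟩
  invFun := fun ⟨S, hS, hc⟩ => ⟨decC N S, (decC_facts hS hc).1⟩
  left_inv := fun ⟨C, hC⟩ => Subtype.ext (col_facts hC (by omega)).2.2.2.2
  right_inv := fun ⟨S, hS, hc⟩ => Subtype.ext (decC_facts hS hc).2.2

def rowEquiv (N r : ℕ) :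
    {C : List ℕ // IsRowComp (N+1) (r+1) C} ≃
      {S : Finset ℕ // S ⊆ Finset.Icc 1 N ∧ S.card = r} where
  toFun := fun ⟨C, hC⟩ => ⟨encR C, (row_facts hC (by omega)).2.2.1,
    by have := (row_facts hC (by omega)).2.2.2.1; omega⟩
  invFun := fun ⟨S, hS, hc⟩ => ⟨decR N S, (decR_facts hS hc).1⟩
  left_inv := fun ⟨C, hC⟩ => Subtype.ext (row_facts hC (by omega)).2.2.2.2.1
  right_inv := fun ⟨S, hS, hc⟩ => Subtype.ext (decR_facts hS hc).2.2

lemma card_subsets (N r : ℕ) :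
    Nat.card {S : Finset ℕ // S ⊆ Finset.Icc 1 N ∧ S.card = r} = N.choose r := by
  rw [Nat.card_congr (Equiv.subtypeEquivRight
    (q := fun S => S ∈ Finset.powersetCard r (Finset.Icc 1 N))
    (fun S => (Finset.mem_powersetCard).symm))]
  rw [Nat.card_eq_finsetCard, Finset.card_powersetCard, Nat.card_Icc]
  simp

instance finite_subsets (N r : ℕ) : Finite {S : Finset ℕ // S ⊆ Finset.Icc 1 N ∧ S.card = r} :=
  Finite.of_equiv _ (Equiv.subtypeEquivRight
    (q := fun S => S ∈ Finset.powersetCard r (Finset.Icc 1 N))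
    (fun S => (Finset.mem_powersetCard).symm)).symm

instance finite_col (N r : ℕ) : Finite {C : List ℕ // IsComposition (N+1) (r+1) C} :=
  Finite.of_equiv _ (colEquiv N r).symm

instance finite_row (N r : ℕ) : Finite {C : List ℕ // IsRowComp (N+1) (r+1) C} :=
  Finite.of_equiv _ (rowEquiv N r).symm

lemma card_colcomps (N r : ℕ) :
    Nat.card {C : List ℕ // IsComposition (N+1) (r+1) C} = N.choose r := by
  rw [Nat.card_congr (colEquiv N r), card_subsets]

lemma card_rowcomps (N r : ℕ) :
    Nat.card {C : List ℕ // IsRowComp (N+1) (r+1) C} = N.choose r := by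
  rw [Nat.card_congr (rowEquiv N r), card_subsets]

lemma card_split (P : List ℕ → Prop) [hfin : Finite {C : List ℕ // P C}] (B : List ℕ)
    (hB : P B) :
    Nat.card {C : List ℕ // P C ∧ List.Lex (·<·) B C} +
      Nat.card {C : List ℕ // P C ∧ List.Lex (·<·) C B} + 1
      = Nat.card {C : List ℕ // P C} := by
  classical
  have hPfin : {C : List ℕ | P C}.Finite := Set.finite_coe_iff.mp hfin
  have h1 : {C : List ℕ | P C ∧ List.Lex (·<·) B C}.Finite := hPfin.subset (fun C hC => hC.1)
  have h2 : {C : List ℕ | P C ∧ List.Lex (·<·) C B}.Finite := hPfin.subset (fun C hC => hC.1)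
  have hunion : {C : List ℕ | P C} =
      ({C : List ℕ | P C ∧ List.Lex (·<·) B C} ∪ {C : List ℕ | P C ∧ List.Lex (·<·) C B}) ∪ {B} := by
    ext C
    simp only [Set.mem_union, Set.mem_setOf_eq, Set.mem_singleton_iff]
    constructor
    · intro h
      rcases TA2.lex_trichotomy B C with h' | h' | h'
      · exact Or.inl (Or.inl ⟨h, h'⟩)
      · exact Or.inr h'.symm
      · exact Or.inl (Or.inr ⟨h, h'⟩)
    · rintro ((⟨h, -⟩ | ⟨h, -⟩) | rfl)
      exacts [h, h, hB]
  have hd1 : Disjoint {C : List ℕ | P C ∧ List.Lex (·<·) B C}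
      {C : List ℕ | P C ∧ List.Lex (·<·) C B} := by
    rw [Set.disjoint_left]
    rintro C ⟨-, h⟩ ⟨-, h'⟩
    exact TA2.lex_asymm h h'
  have hd2 : Disjoint ({C : List ℕ | P C ∧ List.Lex (·<·) B C} ∪
      {C : List ℕ | P C ∧ List.Lex (·<·) C B}) {B} := by
    rw [Set.disjoint_right]
    rintro C rfl (⟨-, h⟩ | ⟨-, h⟩) <;> exact TA2.lex_irrefl _ h
  have e1 : Nat.card {C : List ℕ // P C} = {C : List ℕ | P C}.ncard :=
    Nat.card_coe_set_eq _
  have e2 : Nat.card {C : List ℕ // P C ∧ List.Lex (·<·) B C}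
      = {C : List ℕ | P C ∧ List.Lex (·<·) B C}.ncard := Nat.card_coe_set_eq _
  have e3 : Nat.card {C : List ℕ // P C ∧ List.Lex (·<·) C B}
      = {C : List ℕ | P C ∧ List.Lex (·<·) C B}.ncard := Nat.card_coe_set_eq _
  rw [e1, e2, e3, hunion, Set.ncard_union_eq hd2 (h1.union h2) (Set.finite_singleton B),
    Set.ncard_union_eq hd1 h1 h2, Set.ncard_singleton]

end TA7

namespace TA8
open List Finset TA6 TA7

def equivOfInv {α β : Type*} (P : α → Prop) (Q : β → Prop) (f : α → β) (g : β → α)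
    (hf : ∀ a, P a → Q (f a)) (hg : ∀ b, Q b → P (g b))
    (hgf : ∀ a, P a → g (f a) = a) (hfg : ∀ b, Q b → f (g b) = b) :
    {a // P a} ≃ {b // Q b} where
  toFun a := ⟨f a.1, hf a.1 a.2⟩
  invFun b := ⟨g b.1, hg b.1 b.2⟩
  left_inv a := Subtype.ext (hgf a.1 a.2)
  right_inv b := Subtype.ext (hfg b.1 b.2)

lemma cond_iff_dom {N r : ℕ} {A B : List ℕ} (hA : IsRowComp (N+1) (r+1) A)
    (hB : IsComposition (N+1) (r+1) B) :
    (∀ m, 1 ≤ m → m ≤ r+1 → (B.take m).sum < (A.take m).sum) ↔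
      TA5.Dom r (encC B) (encR A) := by
  have hmemA := (row_facts hA (by omega)).1
  have hsortA := (row_facts hA (by omega)).2.1
  have hsortB := (col_facts hB (by omega)).2.1
  have hjmA : (TA.marks A).length = r := by
    rw [TA.marks, TA.marksAux_length, hA.1.1]
    omega
  have key : ∀ j < r, ((encC B).sort (· ≤ ·)).getD j 0 = (B.take (j+1)).sum ∧
      ((encR A).sort (· ≤ ·)).getD j 0 = (A.take (j+1)).sum - 1 ∧
      2 ≤ (A.take (j+1)).sum := by
    intro j hj
    have hjB : j + 1 < B.length := by rw [hB.1]; omega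
    have hjA : j + 1 < A.length := by rw [hA.1.1]; omega
    have e1 : (TA.marks B).getD j 0 = 0 + (B.take (j+1)).sum := TA.marksAux_getD 0 B j hjB
    have e2 : (TA.marks A).getD j 0 = 0 + (A.take (j+1)).sum := TA.marksAux_getD 0 A j hjA
    have hjm : j < (TA.marks A).length := by omega
    have e3 : ((TA.marks A).map (· - 1)).getD j 0 = (TA.marks A).getD j 0 - 1 := by
      rw [List.getD_eq_getElem _ _ (by simpa using hjm), List.getD_eq_getElem _ _ hjm,
        List.getElem_map]
    have hment : (TA.marks A).getD j 0 ∈ TA.marks A := by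
      rw [List.getD_eq_getElem _ _ hjm]
      exact List.getElem_mem _
    have h2 := (hmemA _ hment).1
    refine ⟨by rw [hsortB]; omega, by rw [hsortA, e3]; omega, by omega⟩
  constructor
  · intro h j hj
    obtain ⟨e1, e2, e3⟩ := key j hj
    have := h (j+1) (by omega) (by omega)
    omega
  · intro h m h1 h2
    by_cases hm : m = r + 1
    · subst hm
      rw [List.take_of_length_le (le_of_eq hB.1), List.take_of_length_le (le_of_eq hA.1.1),
        hB.2.1, hA.1.2.1]
      omega
    · obtain ⟨e1, e2, e3⟩ := key (m-1) (by omega)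
      have := h (m-1) (by omega)
      rw [show m - 1 + 1 = m by omega] at e1 e2 e3
      omega

lemma cond_transfer {N r : ℕ} (hr : r ≤ N) {A B : List ℕ} (hA : IsRowComp (N+1) (r+1) A)
    (hB : IsComposition (N+1) (r+1) B) :
    (∀ m, 1 ≤ m → m ≤ r+1 → (B.take m).sum < (A.take m).sum) ↔
      (∀ m, 1 ≤ m → m ≤ (N-r)+1 → (((χ N A).take m).sum < ((ψ N B).take m).sum)) := by
  have h1 := psi_props hr hB
  have h2 := chi_props hr hA
  rw [cond_iff_dom hA hB, cond_iff_dom h1.1 h2.1, h1.2.1, h2.2.1]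
  have hcB : (encC B).card = r := by
    have := (col_facts hB (by omega)).2.2.2.1; omega
  have hcA : (encR A).card = r := by
    have := (row_facts hA (by omega)).2.2.2.1; omega
  exact TA5.dom_compl (col_facts hB (by omega)).2.2.1 (row_facts hA (by omega)).2.2.1 hcB hcA

lemma card_row_lex {N r : ℕ} (hr : r ≤ N) {B : List ℕ}
    (hB : IsComposition (N+1) (r+1) B) :
    Nat.card {C : List ℕ // IsRowComp (N+1) ((N-r)+1) C ∧ List.Lex (·<·) (ψ N B) C} =
      Nat.card {D : List ℕ // IsComposition (N+1) (r+1) D ∧ List.Lex (·<·) D B} := by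
  have hNr : N - (N - r) = r := by omega
  have hrr : N - r ≤ N := by omega
  apply Nat.card_congr
  refine equivOfInv _ _ (χ N) (ψ N) ?_ ?_ ?_ ?_
  · rintro C ⟨hC, hlex⟩
    have h1 := (chi_props hrr hC).1
    rw [hNr] at h1
    refine ⟨h1, ?_⟩
    rw [← (chi_props hrr hC).2.2] at hlex
    exact (psi_rev hr hB h1).mp hlex
  · rintro D ⟨hD, hlex⟩
    have h1 := (psi_props hr hD).1
    refine ⟨h1, ?_⟩
    exact (psi_rev hr hB hD).mpr hlex
  · rintro C ⟨hC, -⟩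
    exact (chi_props hrr hC).2.2
  · rintro D ⟨hD, -⟩
    exact (psi_props hr hD).2.2

lemma card_col_lex {N r : ℕ} (hr : r ≤ N) {A : List ℕ}
    (hA : IsRowComp (N+1) (r+1) A) :
    Nat.card {C : List ℕ // IsComposition (N+1) ((N-r)+1) C ∧ List.Lex (·<·) (χ N A) C} =
      Nat.card {D : List ℕ // IsRowComp (N+1) (r+1) D ∧ List.Lex (·<·) D A} := by
  have hNr : N - (N - r) = r := by omega
  have hrr : N - r ≤ N := by omega
  apply Nat.card_congr
  refine equivOfInv _ _ (ψ N) (χ N) ?_ ?_ ?_ ?_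
  · rintro C ⟨hC, hlex⟩
    have h1 := (psi_props hrr hC).1
    rw [hNr] at h1
    refine ⟨h1, ?_⟩
    rw [← (psi_props hrr hC).2.2] at hlex
    exact (chi_rev hr hA h1).mp hlex
  · rintro D ⟨hD, hlex⟩
    have h1 := (chi_props hr hD).1
    refine ⟨h1, ?_⟩
    exact (chi_rev hr hA hD).mpr hlex
  · rintro C ⟨hC, -⟩
    exact (psi_props hrr hC).2.2
  · rintro D ⟨hD, -⟩
    exact (chi_props hr hD).2.2

lemma forward {k ℓ p q : ℕ} (hk : 1 ≤ k) (hl1 : 1 ≤ ℓ) (hl2 : ℓ ≤ k)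
    (h : Tmat k ℓ p q) :
    Tmat k (k + 1 - ℓ) (Nat.choose (k-1) (ℓ-1) + 1 - q) (Nat.choose (k-1) (ℓ-1) + 1 - p) := by
  obtain ⟨N, rfl⟩ : ∃ N, k = N + 1 := ⟨k - 1, by omega⟩
  obtain ⟨r, rfl⟩ : ∃ r, ℓ = r + 1 := ⟨ℓ - 1, by omega⟩
  have hr : r ≤ N := by omega
  have hi' : (N+1) + 1 - (r+1) = (N-r) + 1 := by omega
  have hch : N + 1 - 1 = N := by omega
  have hch2 : r + 1 - 1 = r := by omega
  rw [hi', hch, hch2]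
  obtain ⟨A, B, hA, hB, hpA, hqB, hcond⟩ := h
  have hsplitC := TA7.card_split (IsComposition (N+1) (r+1)) B hB
  have hsplitR := TA7.card_split (IsRowComp (N+1) (r+1)) A hA
  refine ⟨ψ N B, χ N A, (psi_props hr hB).1, (chi_props hr hA).1, ?_, ?_,
    (cond_transfer hr hA hB).mp hcond⟩
  · -- rowIdx
    rw [rowIdx, card_row_lex hr hB]
    rw [colIdx] at hqB
    rw [TA7.card_colcomps] at hsplitC
    omega
  · -- colIdx
    rw [colIdx, card_col_lex hr hA]
    rw [rowIdx] at hpA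
    rw [TA7.card_rowcomps] at hsplitR
    omega

end TA8

/-- `T_ℓ^k` and `T_{k+1-ℓ}^k` are anti-transpose. -/
theorem T_anti_transpose (k ℓ : ℕ) (hk : 1 < k) (hl1 : 1 ≤ ℓ) (hl2 : ℓ ≤ k)
    (p q : ℕ) (hp1 : 1 ≤ p) (hp2 : p ≤ Nat.choose (k - 1) (ℓ - 1))
    (hq1 : 1 ≤ q) (hq2 : q ≤ Nat.choose (k - 1) (ℓ - 1)) :
    Tmat k ℓ p q ↔
      Tmat k (k + 1 - ℓ) (Nat.choose (k - 1) (ℓ - 1) + 1 - q)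
        (Nat.choose (k - 1) (ℓ - 1) + 1 - p) := by
  constructor
  · exact fun h => TA8.forward (by omega) hl1 hl2 h
  · intro h
    have hfwd := TA8.forward (k := k) (ℓ := k + 1 - ℓ) (by omega) (by omega) (by omega) h
    have e1 : k + 1 - (k + 1 - ℓ) = ℓ := by omega
    have e3 : Nat.choose (k-1) ((k + 1 - ℓ) - 1) = Nat.choose (k-1) (ℓ-1) := by
      rw [show (k + 1 - ℓ) - 1 = (k-1) - (ℓ-1) by omega]
      exact Nat.choose_symm (by omega)
    rw [e1, e3] at hfwd
    have e4 : Nat.choose (k-1) (ℓ-1) + 1 - (Nat.choose (k-1) (ℓ-1) + 1 - p) = p := by omega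
    have e5 : Nat.choose (k-1) (ℓ-1) + 1 - (Nat.choose (k-1) (ℓ-1) + 1 - q) = q := by omega
    rwa [e4, e5] at hfwd
end

section
/- If k is odd, ℓ = (k+1)/2, and ℓ is even, then T_ℓ^k is anti-symmetric: with n = C(k-1, ℓ-1), t_ℓ^k(p, q) = t_ℓ^k(n+1-q, n+1-p) for all 1 ≤ p, q ≤ n. -/
namespace Taux

/-- partial sum -/
def PS (B : List ℕ) (m : ℕ) : ℕ := (B.take m).sum

@[simp] lemma PS_zero (B : List ℕ) : PS B 0 = 0 := rfl

lemma PS_cons (b : ℕ) (t : List ℕ) (m : ℕ) : PS (b :: t) (m + 1) = b + PS t m := by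
  simp [PS, List.take_succ_cons]

lemma PS_succ (B : List ℕ) (m : ℕ) (h : m < B.length) :
    PS B (m + 1) = PS B m + B[m] := List.sum_take_succ _ _ _

lemma PS_length (B : List ℕ) : PS B B.length = B.sum := by simp [PS]

lemma PS_lt_PS {B : List ℕ} (hpos : ∀ x ∈ B, 0 < x) {m m' : ℕ} (h : m < m')
    (h' : m' ≤ B.length) : PS B m < PS B m' := by
  induction m' with
  | zero => omega
  | succ n ih =>
    have hn : n < B.length := by omega
    rw [PS_succ B n hn]
    have hB : 0 < B[n] := hpos _ (List.getElem_mem hn)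
    rcases Nat.lt_or_ge m n with hc | hc
    · have := ih hc (by omega); omega
    · have : m = n := by omega
      subst this; omega

lemma PS_le_PS {B : List ℕ} (hpos : ∀ x ∈ B, 0 < x) {m m' : ℕ} (h : m ≤ m')
    (h' : m' ≤ B.length) : PS B m ≤ PS B m' := by
  rcases Nat.eq_or_lt_of_le h with rfl | h
  · exact le_rfl
  · exact (PS_lt_PS hpos h h').le

lemma le_of_PS_le {B : List ℕ} (hpos : ∀ x ∈ B, 0 < x) {m m' : ℕ}
    (hm : m ≤ B.length) (hm' : m' ≤ B.length) (h : PS B m ≤ PS B m') : m ≤ m' := by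
  by_contra hc
  have := PS_lt_PS hpos (show m' < m by omega) hm
  omega

/-- lex order in terms of partial sums -/
lemma lex_iff_ps : ∀ (B C : List ℕ), B.length = C.length →
    (List.Lex (· < ·) B C ↔ ∃ m, m < B.length ∧ (∀ j ≤ m, PS B j = PS C j) ∧
      PS B (m + 1) < PS C (m + 1))
  | [], [], _ => by
      constructor
      · intro h; cases h
      · rintro ⟨m, hm, -⟩; simp at hm
  | [], c :: C, h => by simp at h
  | b :: B, [], h => by simp at h
  | b :: B, c :: C, h => by
      have hlen : B.length = C.length := by simpa using h
      constructor
      · intro hlex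
        rcases hlex with _ | hbc | ⟨hlex⟩
        swap
        · -- cons case : b = c, Lex B C
          obtain ⟨m, hm, heq, hlt⟩ := (lex_iff_ps B C hlen).mp hlex
          refine ⟨m + 1, by simpa using hm, ?_, ?_⟩
          · intro j hj
            cases j with
            | zero => simp
            | succ j' => rw [PS_cons, PS_cons, heq j' (by omega)]
          · rw [PS_cons, PS_cons]; omega
        · -- rel case : b < c
          exact ⟨0, by simp, by simp, by rw [PS_cons, PS_cons, PS_zero, PS_zero]; omega⟩
      · rintro ⟨m, hm, heq, hlt⟩
        cases m with
        | zero =>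
          have : b < c := by
            have := hlt; rw [PS_cons, PS_cons, PS_zero, PS_zero] at this; omega
          exact List.Lex.rel this
        | succ m' =>
          have hbc : b = c := by
            have := heq 1 (by omega); rw [PS_cons, PS_cons] at this; simpa using this
          subst hbc
          apply List.Lex.cons
          refine (lex_iff_ps B C hlen).mpr ⟨m', by simpa using hm, ?_, ?_⟩
          · intro j hj
            have := heq (j + 1) (by omega); rw [PS_cons, PS_cons] at this; omega
          · have := hlt; rw [PS_cons, PS_cons] at this; omega

end Taux
namespace Taux

/-- the set of proper partial sums -/
def toX (ℓ : ℕ) (B : List ℕ) : Finset ℕ := (Finset.Ico 1 ℓ).image (PS B)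

lemma mem_toX {ℓ : ℕ} {B : List ℕ} {t : ℕ} :
    t ∈ toX ℓ B ↔ ∃ m, 1 ≤ m ∧ m < ℓ ∧ PS B m = t := by
  simp [toX, Finset.mem_image, Finset.mem_Ico]
  tauto

section comps
variable {k ℓ : ℕ}

lemma comp_pos {B : List ℕ} (hB : IsComposition k ℓ B) : ∀ x ∈ B, 0 < x := hB.2.2

lemma comp_PS_ℓ {B : List ℕ} (hB : IsComposition k ℓ B) : PS B ℓ = k := by
  rw [← hB.1, PS_length, hB.2.1]

lemma comp_PS_lt {B : List ℕ} (hB : IsComposition k ℓ B) {m m' : ℕ} (h : m < m')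
    (h' : m' ≤ ℓ) : PS B m < PS B m' := PS_lt_PS hB.2.2 h (hB.1 ▸ h')

lemma toX_subset {B : List ℕ} (hB : IsComposition k ℓ B) :
    toX ℓ B ⊆ Finset.Icc 1 (k - 1) := by
  intro t ht
  obtain ⟨m, hm1, hm2, rfl⟩ := mem_toX.mp ht
  have h1 : PS B 0 < PS B m := comp_PS_lt hB (by omega) (by omega)
  have h2 : PS B m < PS B ℓ := comp_PS_lt hB hm2 le_rfl
  rw [comp_PS_ℓ hB] at h2
  simp only [PS_zero] at h1
  simp only [Finset.mem_Icc]; omega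

lemma toX_card {B : List ℕ} (hB : IsComposition k ℓ B) : (toX ℓ B).card = ℓ - 1 := by
  rw [toX, Finset.card_image_of_injOn, Nat.card_Ico]
  intro m hm m' hm' h
  simp only [Finset.coe_Ico, Set.mem_Ico] at hm hm'
  have h1 := le_of_PS_le hB.2.2 (hB.1 ▸ (by omega : m ≤ ℓ)) (hB.1 ▸ (by omega : m' ≤ ℓ)) h.le
  have h2 := le_of_PS_le hB.2.2 (hB.1 ▸ (by omega : m' ≤ ℓ)) (hB.1 ▸ (by omega : m ≤ ℓ)) h.ge
  omega

/-- split-point comparison of finsets -/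
def SplitLt (X Y : Finset ℕ) : Prop :=
  ∃ x ∈ X, x ∉ Y ∧ ∀ y < x, (y ∈ X ↔ y ∈ Y)

lemma lex_splitLt {B C : List ℕ} (hB : IsComposition k ℓ B) (hC : IsComposition k ℓ C)
    (h : List.Lex (· < ·) B C) : SplitLt (toX ℓ B) (toX ℓ C) := by
  obtain ⟨m, hm, heq, hlt⟩ := (lex_iff_ps B C (hB.1.trans hC.1.symm)).mp h
  rw [hB.1] at hm
  -- m + 1 < ℓ since PS B ℓ = PS C ℓ = k
  have hmℓ : m + 1 < ℓ := by
    rcases Nat.lt_or_ge (m + 1) ℓ with h' | h'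
    · exact h'
    · have : m + 1 = ℓ := by omega
      rw [this, comp_PS_ℓ hB, comp_PS_ℓ hC] at hlt; omega
  refine ⟨PS B (m + 1), mem_toX.mpr ⟨m + 1, by omega, hmℓ, rfl⟩, ?_, ?_⟩
  · -- not in toX C
    intro hmem
    obtain ⟨j, hj1, hj2, hj⟩ := mem_toX.mp hmem
    rcases Nat.lt_or_ge m j with h' | h'
    · have : PS C (m + 1) ≤ PS C j := PS_le_PS hC.2.2 (by omega) (hC.1 ▸ by omega)
      omega
    · have : PS C j = PS B j := (heq j h').symm
      have h2 : PS B j < PS B (m + 1) := comp_PS_lt hB (by omega) (by omega)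
      omega
  · intro y hy
    constructor
    · intro hyB
      obtain ⟨j, hj1, hj2, rfl⟩ := mem_toX.mp hyB
      have hjm : j ≤ m := by
        by_contra hc
        have : PS B (m + 1) ≤ PS B j := PS_le_PS hB.2.2 (by omega) (hB.1 ▸ by omega)
        omega
      exact mem_toX.mpr ⟨j, hj1, hj2, (heq j hjm).symm⟩
    · intro hyC
      obtain ⟨j, hj1, hj2, rfl⟩ := mem_toX.mp hyC
      have hjm : j ≤ m := by
        by_contra hc
        have h1 : PS C (m + 1) ≤ PS C j := PS_le_PS hC.2.2 (by omega) (hC.1 ▸ by omega)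
        omega
      exact mem_toX.mpr ⟨j, hj1, hj2, heq j hjm⟩

lemma lex_iff_splitLt {B C : List ℕ} (hB : IsComposition k ℓ B) (hC : IsComposition k ℓ C) :
    List.Lex (· < ·) B C ↔ SplitLt (toX ℓ B) (toX ℓ C) := by
  constructor
  · exact lex_splitLt hB hC
  · intro ⟨x, hxB, hxC, hiff⟩
    rcases lt_trichotomy B C with h | h | h
    · exact h
    · subst h; exact absurd hxB hxC
    · exfalso
      obtain ⟨x', hx'C, hx'B, hiff'⟩ := lex_splitLt hC hB h
      rcases lt_trichotomy x x' with hxx | hxx | hxx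
      · exact hxC ((hiff' x hxx).mpr hxB)
      · subst hxx; exact hx'B hxB
      · exact hx'B ((hiff x' hxx).mpr hx'C)

lemma toX_inj {B C : List ℕ} (hB : IsComposition k ℓ B) (hC : IsComposition k ℓ C)
    (h : toX ℓ B = toX ℓ C) : B = C := by
  rcases lt_trichotomy B C with h' | h' | h'
  · obtain ⟨x, hxB, hxC, -⟩ := lex_splitLt hB hC h'
    rw [h] at hxB; exact absurd hxB hxC
  · exact h'
  · obtain ⟨x, hxB, hxC, -⟩ := lex_splitLt hC hB h'
    rw [h] at hxC; exact absurd hxB hxC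

lemma splitLt_compl {I X Y : Finset ℕ} (hX : X ⊆ I) (_hY : Y ⊆ I) :
    SplitLt X Y → SplitLt (I \ Y) (I \ X) := by
  rintro ⟨x, hxX, hxY, hiff⟩
  refine ⟨x, Finset.mem_sdiff.mpr ⟨hX hxX, hxY⟩, by simp [Finset.mem_sdiff, hxX], ?_⟩
  intro y hy
  simp only [Finset.mem_sdiff]
  constructor
  · rintro ⟨hyI, hyY⟩; exact ⟨hyI, fun hyX => hyY ((hiff y hy).mp hyX)⟩
  · rintro ⟨hyI, hyX⟩; exact ⟨hyI, fun hyY => hyX ((hiff y hy).mpr hyY)⟩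

end comps
end Taux
namespace Taux

/-- number of elements of `X` that are `≤ t` -/
def cnt (X : Finset ℕ) (t : ℕ) : ℕ := (X.filter (· ≤ t)).card

section cnt
variable {k ℓ : ℕ}

lemma cnt_toX {B : List ℕ} (hB : IsComposition k ℓ B) (t : ℕ) :
    cnt (toX ℓ B) t = ((Finset.Ico 1 ℓ).filter (fun m => PS B m ≤ t)).card := by
  rw [cnt, toX, Finset.filter_image]
  apply Finset.card_image_of_injOn
  intro m hm m' hm' h
  simp only [Finset.coe_filter, Set.mem_setOf_eq, Finset.mem_Ico] at hm hm'
  have h1 := le_of_PS_le hB.2.2 (hB.1 ▸ (by omega : m ≤ ℓ)) (hB.1 ▸ (by omega : m' ≤ ℓ)) h.le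
  have h2 := le_of_PS_le hB.2.2 (hB.1 ▸ (by omega : m' ≤ ℓ)) (hB.1 ▸ (by omega : m ≤ ℓ)) h.ge
  omega

lemma le_cnt_toX {B : List ℕ} (hB : IsComposition k ℓ B) {m : ℕ} (hm1 : 1 ≤ m) (hm2 : m < ℓ) :
    m ≤ cnt (toX ℓ B) (PS B m) := by
  rw [cnt_toX hB]
  calc m = (Finset.Ico 1 (m + 1)).card := by rw [Nat.card_Ico]; omega
  _ ≤ _ := by
      apply Finset.card_le_card
      intro j hj
      simp only [Finset.mem_Ico] at hj
      simp only [Finset.mem_filter, Finset.mem_Ico]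
      exact ⟨⟨hj.1, by omega⟩, PS_le_PS hB.2.2 (by omega) (hB.1 ▸ by omega)⟩

lemma PS_le_of_cnt {B : List ℕ} (hB : IsComposition k ℓ B) {m t : ℕ} (hm1 : 1 ≤ m)
    (hm2 : m < ℓ) (h : m ≤ cnt (toX ℓ B) t) : PS B m ≤ t := by
  by_contra hc
  rw [cnt_toX hB] at h
  have hsub : (Finset.Ico 1 ℓ).filter (fun j => PS B j ≤ t) ⊆ Finset.Ico 1 m := by
    intro j hj
    simp only [Finset.mem_filter, Finset.mem_Ico] at hj ⊢
    refine ⟨hj.1.1, ?_⟩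
    by_contra hc'
    have : PS B m ≤ PS B j := PS_le_PS hB.2.2 (by omega) (hB.1 ▸ by omega)
    omega
  have := Finset.card_le_card hsub
  rw [Nat.card_Ico] at this
  omega

/-- Gale dominance in terms of counting -/
lemma dom_iff_cnt {B C : List ℕ} (hB : IsComposition k ℓ B) (hC : IsComposition k ℓ C) :
    (∀ m, 1 ≤ m → m ≤ ℓ → PS C m ≤ PS B m) ↔ ∀ t, cnt (toX ℓ B) t ≤ cnt (toX ℓ C) t := by
  constructor
  · intro h t
    rw [cnt_toX hB, cnt_toX hC]
    apply Finset.card_le_card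
    intro m hm
    simp only [Finset.mem_filter, Finset.mem_Ico] at hm ⊢
    exact ⟨hm.1, le_trans (h m hm.1.1 (by omega)) hm.2⟩
  · intro h m hm1 hm2
    rcases Nat.eq_or_lt_of_le hm2 with rfl | hm2'
    · rw [comp_PS_ℓ hB, comp_PS_ℓ hC]
    · exact PS_le_of_cnt hC hm1 hm2' (le_trans (le_cnt_toX hB hm1 hm2') (h _))

lemma cnt_le_cnt {X Y : Finset ℕ} (h : X ⊆ Y) (t : ℕ) : cnt X t ≤ cnt Y t :=
  Finset.card_le_card (Finset.filter_subset_filter _ h)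

lemma cnt_compl {I X : Finset ℕ} (hX : X ⊆ I) (t : ℕ) :
    cnt (I \ X) t + cnt X t = cnt I t := by
  have hfs : (I \ X).filter (· ≤ t) = I.filter (· ≤ t) \ X.filter (· ≤ t) := by
    ext a; simp only [Finset.mem_filter, Finset.mem_sdiff]; tauto
  rw [cnt, cnt, cnt, hfs]
  exact Finset.card_sdiff_add_card_eq_card (Finset.filter_subset_filter _ hX)

lemma cnt_flip {I X Y : Finset ℕ} (hX : X ⊆ I) (hY : Y ⊆ I)
    (h : ∀ t, cnt X t ≤ cnt Y t) : ∀ t, cnt (I \ Y) t ≤ cnt (I \ X) t := by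
  intro t
  have h1 := cnt_compl hX t
  have h2 := cnt_compl hY t
  have := h t
  omega

end cnt
end Taux
namespace Taux

/-- successive differences, seeded with `prev`, capped with `tot` -/
def diffs : ℕ → List ℕ → ℕ → List ℕ
  | prev, [], tot => [tot - prev]
  | prev, x :: xs, tot => (x - prev) :: diffs x xs tot

lemma diffs_length : ∀ (prev : ℕ) (L : List ℕ) (tot : ℕ),
    (diffs prev L tot).length = L.length + 1
  | _, [], _ => rfl
  | prev, x :: xs, tot => by simp [diffs, diffs_length x xs tot]

lemma pairwise_shift {prev : ℕ} {L : List ℕ} {tot x : ℕ} {xs : List ℕ}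
    (hL : L = x :: xs) (HP : (prev :: (L ++ [tot])).Pairwise (· < ·)) :
    (x :: (xs ++ [tot])).Pairwise (· < ·) := by
  subst hL
  exact (List.pairwise_cons.mp HP).2

lemma diffs_pos : ∀ (prev : ℕ) (L : List ℕ) (tot : ℕ),
    (prev :: (L ++ [tot])).Pairwise (· < ·) → ∀ y ∈ diffs prev L tot, 0 < y
  | prev, [], tot, HP, y, hy => by
      simp only [diffs, List.mem_singleton] at hy
      have : prev < tot := by
        have := (List.pairwise_cons.mp HP).1
        simpa using this tot (by simp)
      omega
  | prev, x :: xs, tot, HP, y, hy => by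
      simp only [diffs, List.mem_cons] at hy
      rcases hy with rfl | hy
      · have : prev < x := by
          have := (List.pairwise_cons.mp HP).1
          simpa using this x (by simp)
        omega
      · exact diffs_pos x xs tot (pairwise_shift rfl HP) y hy

lemma diffs_sum : ∀ (prev : ℕ) (L : List ℕ) (tot : ℕ),
    (prev :: (L ++ [tot])).Pairwise (· < ·) → (diffs prev L tot).sum = tot - prev
  | prev, [], tot, _ => by simp [diffs]
  | prev, x :: xs, tot, HP => by
      have h1 : prev < x := by
        have := (List.pairwise_cons.mp HP).1
        simpa using this x (by simp)
      have HP' := pairwise_shift rfl HP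
      have h2 : x < tot := by
        have := (List.pairwise_cons.mp HP').1
        simpa using this tot (by simp)
      simp only [diffs, List.sum_cons, diffs_sum x xs tot HP']
      omega

lemma diffs_PS : ∀ (prev : ℕ) (L : List ℕ) (tot : ℕ),
    (prev :: (L ++ [tot])).Pairwise (· < ·) → ∀ (m : ℕ) (h : m < L.length),
      PS (diffs prev L tot) (m + 1) + prev = L[m]
  | prev, [], tot, _, m, h => by simp at h
  | prev, x :: xs, tot, HP, m, h => by
      have h1 : prev < x := by
        have := (List.pairwise_cons.mp HP).1
        simpa using this x (by simp)
      have HP' := pairwise_shift rfl HP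
      cases m with
      | zero =>
        simp only [diffs, PS_cons, PS_zero, List.getElem_cons_zero]
        omega
      | succ m' =>
        have hm' : m' < xs.length := by simpa using h
        have IH := diffs_PS x xs tot HP' m' hm'
        simp only [diffs, PS_cons, List.getElem_cons_succ]
        omega

/-- composition from a finset of proper partial sums -/
def fromX (k : ℕ) (X : Finset ℕ) : List ℕ := diffs 0 (X.sort (· ≤ ·)) k

section fromX
variable {k ℓ : ℕ}

lemma fromX_pairwise {X : Finset ℕ} (hX : X ⊆ Finset.Icc 1 (k - 1)) (hk : 1 ≤ k) :
    (0 :: (X.sort (· ≤ ·) ++ [k])).Pairwise (· < ·) := by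
  have hmem : ∀ a ∈ X.sort (· ≤ ·), 1 ≤ a ∧ a ≤ k - 1 := by
    intro a ha
    have := hX (Finset.mem_sort (α := ℕ) (· ≤ ·) |>.mp ha)
    simpa [Finset.mem_Icc] using this
  refine List.pairwise_cons.mpr ⟨?_, ?_⟩
  · intro a ha
    rcases List.mem_append.mp ha with h | h
    · have := (hmem a h).1; omega
    · simp only [List.mem_singleton] at h; omega
  · rw [List.pairwise_append]
    refine ⟨List.sortedLT_iff_pairwise.mp (Finset.sortedLT_sort X), by simp, ?_⟩
    intro a ha b hb
    simp only [List.mem_singleton] at hb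
    subst hb
    have := (hmem a ha).2; omega

lemma fromX_isComp {X : Finset ℕ} (hX : X ⊆ Finset.Icc 1 (k - 1)) (hk : 1 ≤ k)
    (hcard : X.card = ℓ - 1) (hℓ : 1 ≤ ℓ) : IsComposition k ℓ (fromX k X) := by
  have HP := fromX_pairwise hX hk
  refine ⟨?_, ?_, ?_⟩
  · rw [fromX, diffs_length, Finset.length_sort, hcard]; omega
  · rw [fromX, diffs_sum 0 _ k HP]; omega
  · exact diffs_pos 0 _ k HP

lemma toX_fromX {X : Finset ℕ} (hX : X ⊆ Finset.Icc 1 (k - 1)) (hk : 1 ≤ k)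
    (hcard : X.card = ℓ - 1) (hℓ : 1 ≤ ℓ) : toX ℓ (fromX k X) = X := by
  have HP := fromX_pairwise hX hk
  have hlen : (X.sort (· ≤ ·)).length = ℓ - 1 := by rw [Finset.length_sort, hcard]
  ext t
  rw [mem_toX]
  constructor
  · rintro ⟨m, hm1, hm2, rfl⟩
    have hm : m - 1 < (X.sort (· ≤ ·)).length := by omega
    have := diffs_PS 0 _ k HP (m - 1) hm
    have hms : m - 1 + 1 = m := by omega
    rw [hms] at this
    rw [fromX]
    rw [show PS (diffs 0 (X.sort (· ≤ ·)) k) m = (X.sort (· ≤ ·))[m-1] by omega]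
    exact Finset.mem_sort (α := ℕ) (· ≤ ·) |>.mp (List.getElem_mem hm)
  · intro ht
    have ht' : t ∈ X.sort (· ≤ ·) := (Finset.mem_sort (α := ℕ) (· ≤ ·)).mpr ht
    obtain ⟨j, hj, rfl⟩ := List.getElem_of_mem ht'
    have := diffs_PS 0 _ k HP j hj
    refine ⟨j + 1, by omega, by omega, ?_⟩
    rw [fromX]
    omega

lemma fromX_toX {B : List ℕ} (hB : IsComposition k ℓ B) (hk : 1 ≤ k) (hℓ : 1 ≤ ℓ) :
    fromX k (toX ℓ B) = B := by
  have h1 : toX ℓ (fromX k (toX ℓ B)) = toX ℓ B :=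
    toX_fromX (toX_subset hB) hk (toX_card hB) hℓ
  exact toX_inj (fromX_isComp (toX_subset hB) hk (toX_card hB) hℓ) hB h1

end fromX
end Taux
namespace Taux

/-- the complement composition -/
def Phi (k ℓ : ℕ) (B : List ℕ) : List ℕ := fromX k (Finset.Icc 1 (k - 1) \ toX ℓ B)

section phi
variable {k ℓ : ℕ} (hk2 : k + 1 = 2 * ℓ) (hℓ : 1 ≤ ℓ)

include hk2 hℓ

lemma hk1 : 1 ≤ k := by omega

lemma compl_card {B : List ℕ} (hB : IsComposition k ℓ B) :
    (Finset.Icc 1 (k - 1) \ toX ℓ B).card = ℓ - 1 := by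
  rw [Finset.card_sdiff_of_subset (toX_subset hB), toX_card hB, Nat.card_Icc]
  omega

lemma phi_isComp {B : List ℕ} (hB : IsComposition k ℓ B) :
    IsComposition k ℓ (Phi k ℓ B) :=
  fromX_isComp Finset.sdiff_subset (by omega) (compl_card hk2 hℓ hB) hℓ

lemma toX_phi {B : List ℕ} (hB : IsComposition k ℓ B) :
    toX ℓ (Phi k ℓ B) = Finset.Icc 1 (k - 1) \ toX ℓ B :=
  toX_fromX Finset.sdiff_subset (by omega) (compl_card hk2 hℓ hB) hℓ

lemma phi_phi {B : List ℕ} (hB : IsComposition k ℓ B) : Phi k ℓ (Phi k ℓ B) = B := by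
  rw [Phi, toX_phi hk2 hℓ hB, Finset.sdiff_sdiff_eq_self (toX_subset hB),
    fromX_toX hB (by omega) hℓ]

lemma phi_lex_mp {B C : List ℕ} (hB : IsComposition k ℓ B) (hC : IsComposition k ℓ C)
    (h : List.Lex (· < ·) B C) : List.Lex (· < ·) (Phi k ℓ C) (Phi k ℓ B) := by
  rw [lex_iff_splitLt (phi_isComp hk2 hℓ hC) (phi_isComp hk2 hℓ hB),
    toX_phi hk2 hℓ hB, toX_phi hk2 hℓ hC]
  exact splitLt_compl (toX_subset hB) (toX_subset hC)
    ((lex_iff_splitLt hB hC).mp h)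

lemma phi_lex {B C : List ℕ} (hB : IsComposition k ℓ B) (hC : IsComposition k ℓ C) :
    List.Lex (· < ·) B C ↔ List.Lex (· < ·) (Phi k ℓ C) (Phi k ℓ B) := by
  constructor
  · exact phi_lex_mp hk2 hℓ hB hC
  · intro h
    have := phi_lex_mp hk2 hℓ (phi_isComp hk2 hℓ hC) (phi_isComp hk2 hℓ hB) h
    rwa [phi_phi hk2 hℓ hB, phi_phi hk2 hℓ hC] at this

lemma phi_dom_mp {B C : List ℕ} (hB : IsComposition k ℓ B) (hC : IsComposition k ℓ C)
    (h : ∀ m, 1 ≤ m → m ≤ ℓ → PS C m ≤ PS B m) :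
    ∀ m, 1 ≤ m → m ≤ ℓ → PS (Phi k ℓ B) m ≤ PS (Phi k ℓ C) m := by
  rw [dom_iff_cnt (phi_isComp hk2 hℓ hC) (phi_isComp hk2 hℓ hB),
    toX_phi hk2 hℓ hB, toX_phi hk2 hℓ hC]
  exact cnt_flip (toX_subset hB) (toX_subset hC) ((dom_iff_cnt hB hC).mp h)

lemma phi_dom {B C : List ℕ} (hB : IsComposition k ℓ B) (hC : IsComposition k ℓ C) :
    (∀ m, 1 ≤ m → m ≤ ℓ → PS C m ≤ PS B m) ↔
    (∀ m, 1 ≤ m → m ≤ ℓ → PS (Phi k ℓ B) m ≤ PS (Phi k ℓ C) m) := by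
  constructor
  · exact phi_dom_mp hk2 hℓ hB hC
  · intro h
    have := phi_dom_mp hk2 hℓ (phi_isComp hk2 hℓ hC) (phi_isComp hk2 hℓ hB) h
    rwa [phi_phi hk2 hℓ hC, phi_phi hk2 hℓ hB] at this

lemma card_comps : Nat.card {C : List ℕ // IsComposition k ℓ C} =
    Nat.choose (k - 1) (ℓ - 1) := by
  have e : {C : List ℕ // IsComposition k ℓ C} ≃
      {X : Finset ℕ // X ∈ Finset.powersetCard (ℓ - 1) (Finset.Icc 1 (k - 1))} :=
    { toFun := fun ⟨B, hB⟩ => ⟨toX ℓ B,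
        Finset.mem_powersetCard.mpr ⟨toX_subset hB, toX_card hB⟩⟩
      invFun := fun ⟨X, hX⟩ => ⟨fromX k X,
        fromX_isComp (Finset.mem_powersetCard.mp hX).1 (by omega)
          (Finset.mem_powersetCard.mp hX).2 hℓ⟩
      left_inv := fun ⟨B, hB⟩ => Subtype.ext (fromX_toX hB (by omega) hℓ)
      right_inv := fun ⟨X, hX⟩ => Subtype.ext
        (toX_fromX (Finset.mem_powersetCard.mp hX).1 (by omega)
          (Finset.mem_powersetCard.mp hX).2 hℓ) }
  rw [Nat.card_congr e, Nat.card_eq_fintype_card, Fintype.card_coe,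
    Finset.card_powersetCard, Nat.card_Icc, Nat.add_sub_cancel]

lemma comp_finite : {C : List ℕ | IsComposition k ℓ C}.Finite := by
  have hsub : {C : List ℕ | IsComposition k ℓ C} ⊆
      (fromX k) '' ((Finset.powersetCard (ℓ - 1) (Finset.Icc 1 (k - 1)) : Finset (Finset ℕ)) : Set (Finset ℕ)) := by
    intro B hB
    exact ⟨toX ℓ B, by
      simp only [Finset.mem_coe, Finset.mem_powersetCard]
      exact ⟨toX_subset hB, toX_card hB⟩, fromX_toX hB (by omega) hℓ⟩
  exact (((Finset.powersetCard (ℓ - 1) (Finset.Icc 1 (k - 1))).finite_toSet).image _).subset hsub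

lemma partition {B : List ℕ} (hB : IsComposition k ℓ B) :
    Nat.card {C : List ℕ // IsComposition k ℓ C ∧ List.Lex (· < ·) B C} +
    Nat.card {C : List ℕ // IsComposition k ℓ C ∧ List.Lex (· < ·) C B} + 1 =
    Nat.choose (k - 1) (ℓ - 1) := by
  classical
  have hfin := comp_finite hk2 hℓ (k := k) (ℓ := ℓ)
  set S1 : Set (List ℕ) := {C | IsComposition k ℓ C ∧ List.Lex (· < ·) B C} with hS1
  set S2 : Set (List ℕ) := {C | IsComposition k ℓ C ∧ List.Lex (· < ·) C B} with hS2
  have hf1 : S1.Finite := hfin.subset (fun C hC => hC.1)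
  have hf2 : S2.Finite := hfin.subset (fun C hC => hC.1)
  have hunion : {C : List ℕ | IsComposition k ℓ C} = S1 ∪ (S2 ∪ {B}) := by
    ext C
    simp only [Set.mem_setOf_eq, Set.mem_union, Set.mem_singleton_iff, hS1, hS2]
    constructor
    · intro hC
      rcases lt_trichotomy B C with h | h | h
      · exact Or.inl ⟨hC, h⟩
      · exact Or.inr (Or.inr h.symm)
      · exact Or.inr (Or.inl ⟨hC, h⟩)
    · rintro (⟨h, -⟩ | ⟨h, -⟩ | rfl)
      · exact h
      · exact h
      · exact hB
  have hd2 : Disjoint S2 ({B} : Set (List ℕ)) := by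
    rw [Set.disjoint_singleton_right]
    rintro ⟨-, hlex⟩
    exact lt_irrefl B hlex
  have hd1 : Disjoint S1 (S2 ∪ ({B} : Set (List ℕ))) := by
    rw [Set.disjoint_union_right, Set.disjoint_singleton_right]
    constructor
    · rw [Set.disjoint_left]
      rintro C ⟨-, h1⟩ ⟨-, h2⟩
      exact lt_asymm (show B < C from h1) h2
    · rintro ⟨-, hlex⟩
      exact lt_irrefl B hlex
  have hcard := card_comps hk2 hℓ (k := k) (ℓ := ℓ)
  rw [show Nat.card {C : List ℕ // IsComposition k ℓ C} =
      ({C : List ℕ | IsComposition k ℓ C}).ncard from Nat.card_coe_set_eq _] at hcard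
  rw [hunion, Set.ncard_union_eq hd1 hf1 (hf2.union (Set.finite_singleton B)),
    Set.ncard_union_eq hd2 hf2 (Set.finite_singleton B), Set.ncard_singleton] at hcard
  rw [show Nat.card {C : List ℕ // IsComposition k ℓ C ∧ List.Lex (· < ·) B C} =
      S1.ncard from Nat.card_coe_set_eq _,
    show Nat.card {C : List ℕ // IsComposition k ℓ C ∧ List.Lex (· < ·) C B} =
      S2.ncard from Nat.card_coe_set_eq _]
  omega

lemma card_gt_phi {B : List ℕ} (hB : IsComposition k ℓ B) :
    Nat.card {C : List ℕ // IsComposition k ℓ C ∧ List.Lex (· < ·) (Phi k ℓ B) C} =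
    Nat.card {C : List ℕ // IsComposition k ℓ C ∧ List.Lex (· < ·) C B} := by
  apply Nat.card_congr
  refine
    { toFun := fun ⟨C, hC, hlex⟩ => ⟨Phi k ℓ C, phi_isComp hk2 hℓ hC, ?_⟩
      invFun := fun ⟨D, hD, hlex⟩ => ⟨Phi k ℓ D, phi_isComp hk2 hℓ hD, ?_⟩
      left_inv := fun ⟨C, hC, _⟩ => Subtype.ext (phi_phi hk2 hℓ hC)
      right_inv := fun ⟨D, hD, _⟩ => Subtype.ext (phi_phi hk2 hℓ hD) }
  · -- Lex (Phi C) B from hlex : Lex (Phi B) C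
    have := (phi_lex hk2 hℓ (phi_isComp hk2 hℓ hB) hC).mp hlex
    rwa [phi_phi hk2 hℓ hB] at this
  · -- Lex (Phi B) (Phi D) from hlex : Lex D B
    exact (phi_lex hk2 hℓ hD hB).mp hlex

lemma colIdx_phi {B : List ℕ} (hB : IsComposition k ℓ B) :
    colIdx k ℓ (Phi k ℓ B) = Nat.choose (k - 1) (ℓ - 1) + 1 - colIdx k ℓ B := by
  have h1 := partition hk2 hℓ hB
  rw [colIdx, colIdx, card_gt_phi hk2 hℓ hB]
  omega

end phi
end Taux
namespace Taux

/-- decrement the head -/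
def dropHead (A : List ℕ) : List ℕ := (A.headI - 1) :: A.tail

/-- increment the head -/
def liftHead (D : List ℕ) : List ℕ := (D.headI + 1) :: D.tail

lemma lex_cons_iff {a c : ℕ} {t s : List ℕ} :
    List.Lex (· < ·) (a :: t) (c :: s) ↔ a < c ∨ (a = c ∧ List.Lex (· < ·) t s) := by
  constructor
  · intro h
    rcases h with _ | h | ⟨h⟩
    swap
    · exact Or.inr ⟨rfl, by assumption⟩
    · exact Or.inl (by assumption)
  · rintro (h | ⟨rfl, h⟩)
    · exact List.Lex.rel h
    · exact List.Lex.cons h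

section rows
variable {k ℓ : ℕ} (hℓ : 1 ≤ ℓ)

lemma row_exists_cons {A : List ℕ} (hA : IsRowComp k ℓ A) (hℓ : 1 ≤ ℓ) :
    ∃ a t, A = a :: t ∧ 2 ≤ a := by
  cases A with
  | nil => exfalso; have := hA.1.1; simp at this; omega
  | cons a t => exact ⟨a, t, rfl, hA.2⟩

lemma comp_exists_cons {D : List ℕ} (hD : IsComposition k ℓ D) (hℓ : 1 ≤ ℓ) :
    ∃ d t, D = d :: t ∧ 1 ≤ d := by
  cases D with
  | nil => exfalso; have := hD.1; simp at this; omega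
  | cons d t => exact ⟨d, t, rfl, hD.2.2 d (by simp)⟩

include hℓ

lemma dropHead_comp {A : List ℕ} (hA : IsRowComp k ℓ A) :
    IsComposition k ℓ (dropHead A) := by
  obtain ⟨a, t, rfl, ha⟩ := row_exists_cons hA hℓ
  obtain ⟨hlen, hsum, hpos⟩ := hA.1
  simp only [List.length_cons, List.sum_cons] at hlen hsum
  refine ⟨by simpa [dropHead] using hlen, ?_, ?_⟩
  · simp only [dropHead, List.headI, List.tail_cons, List.sum_cons]
    omega
  · intro x hx
    simp only [dropHead, List.headI, List.tail_cons, List.mem_cons] at hx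
    rcases hx with rfl | hx
    · omega
    · exact hpos x (by simp [hx])

lemma liftHead_row {D : List ℕ} (hD : IsComposition k ℓ D) :
    IsRowComp k ℓ (liftHead D) := by
  obtain ⟨d, t, rfl, hd⟩ := comp_exists_cons hD hℓ
  obtain ⟨hlen, hsum, hpos⟩ := hD
  simp only [List.length_cons, List.sum_cons] at hlen hsum
  refine ⟨⟨by simpa [liftHead] using hlen, ?_, ?_⟩, ?_⟩
  · simp only [liftHead, List.headI, List.tail_cons, List.sum_cons]
    omega
  · intro x hx
    simp only [liftHead, List.headI, List.tail_cons, List.mem_cons] at hx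
    rcases hx with rfl | hx
    · omega
    · exact hpos x (by simp [hx])
  · simpa [liftHead] using hd

lemma dropHead_liftHead {D : List ℕ} (hD : IsComposition k ℓ D) :
    dropHead (liftHead D) = D := by
  obtain ⟨d, t, rfl, hd⟩ := comp_exists_cons hD hℓ
  simp [dropHead, liftHead]

lemma liftHead_dropHead {A : List ℕ} (hA : IsRowComp k ℓ A) :
    liftHead (dropHead A) = A := by
  obtain ⟨a, t, rfl, ha⟩ := row_exists_cons hA hℓ
  simp only [dropHead, liftHead, List.headI, List.tail_cons]
  congr 1
  omega

lemma dropHead_lex {A C : List ℕ} (hA : IsRowComp k ℓ A) (hC : IsRowComp k ℓ C) :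
    List.Lex (· < ·) A C ↔ List.Lex (· < ·) (dropHead A) (dropHead C) := by
  obtain ⟨a, t, rfl, ha⟩ := row_exists_cons hA hℓ
  obtain ⟨c, s, rfl, hc⟩ := row_exists_cons hC hℓ
  simp only [dropHead, List.headI, List.tail_cons]
  rw [lex_cons_iff, lex_cons_iff]
  constructor
  · rintro (h | ⟨rfl, h⟩)
    · exact Or.inl (by omega)
    · exact Or.inr ⟨rfl, h⟩
  · rintro (h | ⟨he, h⟩)
    · exact Or.inl (by omega)
    · exact Or.inr ⟨by omega, h⟩

lemma PS_dropHead {A : List ℕ} (hA : IsRowComp k ℓ A) {m : ℕ} (hm : 1 ≤ m) :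
    PS (dropHead A) m + 1 = PS A m := by
  obtain ⟨a, t, rfl, ha⟩ := row_exists_cons hA hℓ
  obtain ⟨m', rfl⟩ : ∃ m', m = m' + 1 := ⟨m - 1, by omega⟩
  simp only [dropHead, List.headI, List.tail_cons]
  rw [PS_cons, PS_cons]
  omega

lemma PS_liftHead {D : List ℕ} (hD : IsComposition k ℓ D) {m : ℕ} (hm : 1 ≤ m) :
    PS (liftHead D) m = PS D m + 1 := by
  have h := PS_dropHead hℓ (liftHead_row hℓ hD) hm
  rw [dropHead_liftHead hℓ hD] at h
  omega

lemma rowIdx_eq_colIdx {A : List ℕ} (hA : IsRowComp k ℓ A) :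
    rowIdx k ℓ A = colIdx k ℓ (dropHead A) := by
  rw [rowIdx, colIdx]
  congr 1
  apply Nat.card_congr
  refine
    { toFun := fun ⟨C, hC, hlex⟩ => ⟨dropHead C, dropHead_comp hℓ hC,
        (dropHead_lex hℓ hA hC).mp hlex⟩
      invFun := fun ⟨D, hD, hlex⟩ => ⟨liftHead D, liftHead_row hℓ hD, ?_⟩
      left_inv := fun ⟨C, hC, _⟩ => Subtype.ext (liftHead_dropHead hℓ hC)
      right_inv := fun ⟨D, hD, _⟩ => Subtype.ext (dropHead_liftHead hℓ hD) }
  have := (dropHead_lex hℓ hA (liftHead_row hℓ hD))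
  rw [dropHead_liftHead hℓ hD] at this
  exact this.mpr hlex

end rows

lemma main_step {k ℓ : ℕ} (hk2 : k + 1 = 2 * ℓ) (hℓ : 1 ≤ ℓ) {p q : ℕ}
    (h : Tmat k ℓ p q) :
    Tmat k ℓ (Nat.choose (k - 1) (ℓ - 1) + 1 - q) (Nat.choose (k - 1) (ℓ - 1) + 1 - p) := by
  obtain ⟨A, B, hA, hB, hpA, hqB, hdom⟩ := h
  have hδA : IsComposition k ℓ (dropHead A) := dropHead_comp hℓ hA
  have hΦB : IsComposition k ℓ (Phi k ℓ B) := phi_isComp hk2 hℓ hB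
  have hΦδA : IsComposition k ℓ (Phi k ℓ (dropHead A)) := phi_isComp hk2 hℓ hδA
  refine ⟨liftHead (Phi k ℓ B), Phi k ℓ (dropHead A), liftHead_row hℓ hΦB, hΦδA, ?_, ?_, ?_⟩
  · rw [rowIdx_eq_colIdx hℓ (liftHead_row hℓ hΦB), dropHead_liftHead hℓ hΦB,
      colIdx_phi hk2 hℓ hB, hqB]
  · rw [colIdx_phi hk2 hℓ hδA, ← rowIdx_eq_colIdx hℓ hA, hpA]
  · -- dominance
    have h1 : ∀ m, 1 ≤ m → m ≤ ℓ → PS B m ≤ PS (dropHead A) m := by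
      intro m hm1 hm2
      have := hdom m hm1 hm2
      have h2 := PS_dropHead hℓ hA hm1
      unfold PS at *
      omega
    have h2 := phi_dom_mp hk2 hℓ hδA hB h1
    intro m hm1 hm2
    have h3 := h2 m hm1 hm2
    have h4 := PS_liftHead hℓ hΦB hm1
    unfold PS at *
    omega

end Taux

/-- If `k` is odd, `ℓ = (k+1)/2` and `ℓ` is even, then `T_ℓ^k` is anti-symmetric. -/
theorem T_anti_symmetric (k ℓ : ℕ) (hodd : Odd k) (hl : ℓ = (k + 1) / 2) (heven : Even ℓ)
    (p q : ℕ) (hp1 : 1 ≤ p) (hp2 : p ≤ Nat.choose (k - 1) (ℓ - 1))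
    (hq1 : 1 ≤ q) (hq2 : q ≤ Nat.choose (k - 1) (ℓ - 1)) :
    Tmat k ℓ p q ↔
      Tmat k ℓ (Nat.choose (k - 1) (ℓ - 1) + 1 - q) (Nat.choose (k - 1) (ℓ - 1) + 1 - p) := by
  obtain ⟨t, rfl⟩ := hodd
  have hk2 : (2 * t + 1) + 1 = 2 * ℓ := by omega
  have hℓ : 1 ≤ ℓ := by omega
  constructor
  · exact Taux.main_step hk2 hℓ
  · intro h
    have := Taux.main_step hk2 hℓ h
    rwa [show Nat.choose (2 * t + 1 - 1) (ℓ - 1) + 1 -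
        (Nat.choose (2 * t + 1 - 1) (ℓ - 1) + 1 - p) = p from by omega,
      show Nat.choose (2 * t + 1 - 1) (ℓ - 1) + 1 -
        (Nat.choose (2 * t + 1 - 1) (ℓ - 1) + 1 - q) = q from by omega] at this
end

section
/- Let A be a composition of k+1 into i parts with first part ≥ 2 and B a composition of k into i parts, with 1 < i < k. If A precedes B entrywise in the sense that the positive-partial-sum condition fails (some partial sum Σ_{j=1}^m (a_j - b_j) ≤ 0), then in descending lexicographic orderings the index p of A can still satisfy p ≤ q for the index q of B; however if p > q (A strictly after B's corresponding position), then necessarily some partial sum Σ_{j=1}^m (a_j - b_j) is ≤ 0. -/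
lemma comp_finite_s18 (k i : ℕ) (p : List ℕ → Prop) :
    Finite {C : List ℕ // IsComposition k i C ∧ p C} := by
  have hbd : ∀ (C : {C : List ℕ // IsComposition k i C ∧ p C}) (j : Fin i),
      (C : List ℕ).getD j 0 < k + 1 := by
    rintro ⟨C, ⟨hlen, hsum, hpos⟩, -⟩ j
    show C.getD (j : ℕ) 0 < k + 1
    have hj : (j : ℕ) < C.length := by rw [hlen]; exact j.2
    have hmem : C.getD (j : ℕ) 0 ∈ C := by
      rw [List.getD_eq_getElem _ _ hj]; exact List.getElem_mem hj
    have := List.single_le_sum (fun x _ => Nat.zero_le x) _ hmem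
    omega
  apply Finite.of_injective
    (fun (C : {C : List ℕ // IsComposition k i C ∧ p C}) => fun j : Fin i => (⟨C.1.getD j 0, hbd C j⟩ : Fin (k+1)))
  intro C D h
  obtain ⟨hlenC, -, -⟩ := C.2.1
  obtain ⟨hlenD, -, -⟩ := D.2.1
  ext1
  apply List.ext_getElem (by omega)
  intro n h1 h2
  have h3 := congrFun h ⟨n, by omega⟩
  simp only [Fin.mk.injEq] at h3
  rwa [List.getD_eq_getElem _ _ h1, List.getD_eq_getElem _ _ h2] at h3

lemma lex_of_partial_le : ∀ (X Y : List ℕ), X.length = Y.length →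
    (∀ m, (X.take m).sum ≤ (Y.take m).sum) →
    List.Lex (· < ·) X Y ∨ X = Y
  | [], [], _, _ => Or.inr rfl
  | x :: xs, y :: ys, hlen, h => by
    have h1 := h 1
    simp at h1
    rcases lt_or_eq_of_le h1 with hlt | heq
    · exact Or.inl (List.Lex.rel hlt)
    · subst heq
      have ih := lex_of_partial_le xs ys (by simpa using hlen) (fun m => by
        have := h (m + 1)
        simp [List.take_succ_cons] at this
        omega)
      rcases ih with h' | h'
      · exact Or.inl (List.Lex.cons h')
      · exact Or.inr (by rw [h'])

/-- Upper-triangularity restated: if the row index of `A` strictly exceeds the column index of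
`B` (in descending lexicographic order), then some partial sum `Σ_{j≤m} (a_j - b_j)` is `≤ 0`. -/
theorem index_gt_implies_partial_sum_fails (k i : ℕ) (hi : 1 < i) (hik : i < k)
    (A B : List ℕ) (hA : IsRowComp k i A) (hB : IsComposition k i B)
    (hpq : colIdx k i B < rowIdx k i A) :
    ∃ m, 1 ≤ m ∧ m ≤ i ∧ (A.take m).sum ≤ (B.take m).sum := by
  by_contra hcon
  push_neg at hcon
  obtain ⟨⟨hAlen, hAsum, hApos⟩, hAhead⟩ := hA
  obtain ⟨hBlen, hBsum, hBpos⟩ := hB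
  have hAne : A ≠ [] := by intro h; rw [h] at hAlen; simp at hAlen; omega
  obtain ⟨a, as, rfl⟩ := List.exists_cons_of_ne_nil hAne
  simp only [List.headI] at hAhead
  have hasum : a + as.sum = k + 1 := by simpa using hAsum
  -- Step 1: B ≤lex (a-1) :: as
  have hstep1 : List.Lex (· < ·) B ((a - 1) :: as) ∨ B = (a - 1) :: as := by
    apply lex_of_partial_le
    · simp at hAlen ⊢; omega
    · intro m
      rcases Nat.eq_zero_or_pos m with rfl | hm
      · simp
      · obtain ⟨n, rfl⟩ := Nat.exists_eq_add_of_le hm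
        rcases le_or_gt (1 + n) i with hle | hgt
        · have := hcon (1 + n) (by omega) hle
          simp only [show 1 + n = n + 1 from by omega, List.take_succ_cons,
            List.sum_cons] at this ⊢
          omega
        · have hBt : B.take (1 + n) = B := List.take_of_length_le (by omega)
          have hAt : ((a - 1) :: as).take (1 + n) = (a - 1) :: as :=
            List.take_of_length_le (by simp at hAlen ⊢; omega)
          rw [hBt, hAt, hBsum]
          simp only [List.sum_cons]
          omega
  -- Step 2: injection from rows above A to columns above B
  have hfin := comp_finite_s18 k i (fun C => List.Lex (· < ·) B C)
  have hcard : Nat.card {C : List ℕ // IsRowComp k i C ∧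
        List.Lex (· < ·) (a :: as) C} ≤
      Nat.card {C : List ℕ // IsComposition k i C ∧ List.Lex (· < ·) B C} := by
    have key : ∀ C : List ℕ, IsRowComp k i C → List.Lex (· < ·) (a :: as) C →
        IsComposition k i ((C.headI - 1) :: C.tail) ∧
          List.Lex (· < ·) B ((C.headI - 1) :: C.tail) := by
      rintro C ⟨⟨hClen, hCsum, hCpos⟩, hChead⟩ hlex
      have hCne : C ≠ [] := by intro h; rw [h] at hClen; simp at hClen; omega
      obtain ⟨c, cs, rfl⟩ := List.exists_cons_of_ne_nil hCne
      simp only [List.headI] at hChead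
      simp only [List.headI, List.tail_cons]
      constructor
      · refine ⟨by simpa using hClen, ?_, ?_⟩
        · have : c + cs.sum = k + 1 := by simpa using hCsum
          simp only [List.sum_cons]; omega
        · intro x hx
          rcases List.mem_cons.mp hx with rfl | hx
          · omega
          · exact hCpos x (List.mem_cons_of_mem _ hx)
      · -- (a-1)::as <lex (c-1)::cs
        have hAC : List.Lex (· < ·) ((a - 1) :: as) ((c - 1) :: cs) := by
          cases hlex with
          | rel h => exact List.Lex.rel (by omega)
          | cons h => exact List.Lex.cons h
        rcases hstep1 with h' | h'
        · exact List.lex_trans (fun h1 h2 => lt_trans h1 h2) h' hAC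
        · rw [h']; exact hAC
    have hinj : Function.Injective
        (fun C : {C : List ℕ // IsRowComp k i C ∧ List.Lex (· < ·) (a :: as) C} =>
          (⟨((C : List ℕ).headI - 1) :: (C : List ℕ).tail,
            key C C.2.1 C.2.2⟩ :
            {C : List ℕ // IsComposition k i C ∧ List.Lex (· < ·) B C})) := by
      intro C D h
      obtain ⟨⟨hClen, -, -⟩, hChead⟩ := C.2.1
      obtain ⟨⟨hDlen, -, -⟩, hDhead⟩ := D.2.1
      simp only [Subtype.mk.injEq] at h
      have hCne : C.1 ≠ [] := by intro hh; rw [hh] at hClen; simp at hClen; omega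
      have hDne : D.1 ≠ [] := by intro hh; rw [hh] at hDlen; simp at hDlen; omega
      obtain ⟨c, cs, hC⟩ := List.exists_cons_of_ne_nil hCne
      obtain ⟨d, ds, hD⟩ := List.exists_cons_of_ne_nil hDne
      rw [hC] at hChead h
      rw [hD] at hDhead h
      simp only [List.headI] at hChead hDhead
      simp only [List.headI, List.tail_cons, List.cons.injEq] at h
      ext1
      rw [hC, hD]
      simp only [List.cons.injEq]
      exact ⟨by omega, h.2⟩
    exact Nat.card_le_card_of_injective _ hinj
  rw [rowIdx, colIdx] at hpq
  omega
end
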